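/- arXiv:1911.13157 — 9 statements merged into one kernel-verified Lean document; each statement's English description precedes it below -/
import Mathlib

section
/- Let n ≥ 2 be an integer with n ≡ 2 (mod 4), and let f₀ be the quadratic form on ℚⁿ given by f₀(x) = -x₀² + x₁² + ⋯ + x_{n-1}². Then for every positive rational number a, the scaled form a·f₀ is equivalent to f₀ over ℚ. -/
set_option maxHeartbeats 1000000
open Matrix

lemma rat_sum_four_squares (a : ℚ) (ha : 0 ≤ a) :
    ∃ p q r s : ℚ, p ^ 2 + q ^ 2 + r ^ 2 + s ^ 2 = a := by
  obtain ⟨w, x, y, z, hw⟩ := Nat.sum_four_squares (a.num.toNat * a.den)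
  have hden : (a.den : ℚ) ≠ 0 := Nat.cast_ne_zero.mpr a.den_nz
  refine ⟨w / a.den, x / a.den, y / a.den, z / a.den, ?_⟩
  have hnum : (a.num.toNat : ℚ) = (a.num : ℚ) := by
    exact_mod_cast congrArg (Int.cast : ℤ → ℚ) (Int.toNat_of_nonneg (Rat.num_nonneg.mpr ha))
  have h1 : ((w : ℚ) ^ 2 + x ^ 2 + y ^ 2 + z ^ 2) = (a.num.toNat : ℚ) * a.den := by
    exact_mod_cast congrArg (Nat.cast : ℕ → ℚ) hw
  have h2 : (a.num : ℚ) = a * a.den := by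
    rw [← div_eq_iff hden, Rat.num_div_den]
  field_simp
  linear_combination h1 + (a.den : ℚ) * hnum + (a.den : ℚ) * h2

lemma exists_E2 (a : ℚ) (ha : a ≠ 0) :
    ∃ E : (Fin 2 → ℚ) ≃ₗ[ℚ] (Fin 2 → ℚ),
      ∀ v : Fin 2 → ℚ, a * (-(E v 0) ^ 2 + (E v 1) ^ 2) = -(v 0) ^ 2 + (v 1) ^ 2 := by
  set b := a⁻¹ with hb
  set M : Matrix (Fin 2) (Fin 2) ℚ := !![(b+1)/2, (b-1)/2; (b-1)/2, (b+1)/2] with hM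
  set N : Matrix (Fin 2) (Fin 2) ℚ := !![a*(b+1)/2, -(a*(b-1)/2); -(a*(b-1)/2), a*(b+1)/2] with hN
  have hMN : M * N = 1 := by
    ext i j
    fin_cases i <;> fin_cases j <;>
      simp [hM, hN, Matrix.mul_apply, Fin.sum_univ_two, hb] <;> field_simp <;> ring
  have hNM : N * M = 1 := mul_eq_one_comm.mp hMN
  refine ⟨LinearEquiv.ofLinear M.mulVecLin N.mulVecLin ?_ ?_, ?_⟩
  · rw [← Matrix.mulVecLin_mul, hMN, Matrix.mulVecLin_one]
  · rw [← Matrix.mulVecLin_mul, hNM, Matrix.mulVecLin_one]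
  · intro v
    rw [LinearEquiv.ofLinear_apply]
    simp [hM, Matrix.mulVecLin_apply, Matrix.mulVec, dotProduct, Fin.sum_univ_two, hb]
    field_simp
    ring

lemma exists_E4 (a : ℚ) (ha : a ≠ 0) (p q r s : ℚ)
    (hs : p ^ 2 + q ^ 2 + r ^ 2 + s ^ 2 = a) :
    ∃ E : (Fin 4 → ℚ) ≃ₗ[ℚ] (Fin 4 → ℚ),
      ∀ v : Fin 4 → ℚ, a * ∑ j : Fin 4, (E v j) ^ 2 = ∑ j : Fin 4, (v j) ^ 2 := by
  set M : Matrix (Fin 4) (Fin 4) ℚ :=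
    !![p/a, -q/a, -r/a, -s/a; q/a, p/a, -s/a, r/a; r/a, s/a, p/a, -q/a; s/a, -r/a, q/a, p/a] with hM
  set N : Matrix (Fin 4) (Fin 4) ℚ :=
    !![p, q, r, s; -q, p, s, -r; -r, -s, p, q; -s, r, -q, p] with hN
  have hMN : M * N = 1 := by
    ext i j
    fin_cases i <;> fin_cases j <;>
      simp [hM, hN, Matrix.mul_apply, Fin.sum_univ_four] <;> field_simp <;>
        first | ring1 | linear_combination hs | linear_combination -hs
  have hNM : N * M = 1 := mul_eq_one_comm.mp hMN
  refine ⟨LinearEquiv.ofLinear M.mulVecLin N.mulVecLin ?_ ?_, ?_⟩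
  · rw [← Matrix.mulVecLin_mul, hMN, Matrix.mulVecLin_one]
  · rw [← Matrix.mulVecLin_mul, hNM, Matrix.mulVecLin_one]
  · intro v
    simp only [LinearEquiv.ofLinear_apply, Matrix.mulVecLin_apply]
    simp [hM, Matrix.mulVec, dotProduct, Fin.sum_univ_four]
    field_simp
    first
    | linear_combination (v 0 ^ 2 + v 1 ^ 2 + v 2 ^ 2 + v 3 ^ 2) * a * hs
    | linear_combination (v 0 ^ 2 + v 1 ^ 2 + v 2 ^ 2 + v 3 ^ 2) * hs
    | linear_combination -(v 0 ^ 2 + v 1 ^ 2 + v 2 ^ 2 + v 3 ^ 2) * hs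

/-- Block-diagonal linear equivalence on `(Fin 2 ⊕ Fin k × Fin 4) → ℚ`. -/
def blockEquiv {k : ℕ} (E₂ : (Fin 2 → ℚ) ≃ₗ[ℚ] (Fin 2 → ℚ))
    (E₄ : (Fin 4 → ℚ) ≃ₗ[ℚ] (Fin 4 → ℚ)) :
    ((Fin 2 ⊕ Fin k × Fin 4) → ℚ) ≃ₗ[ℚ] ((Fin 2 ⊕ Fin k × Fin 4) → ℚ) where
  toFun y := Sum.elim (fun j => E₂ (fun i => y (Sum.inl i)) j)
    (fun p => E₄ (fun i => y (Sum.inr (p.1, i))) p.2)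
  invFun y := Sum.elim (fun j => E₂.symm (fun i => y (Sum.inl i)) j)
    (fun p => E₄.symm (fun i => y (Sum.inr (p.1, i))) p.2)
  map_add' y z := by
    funext w
    cases w with
    | inl j =>
        have h : (fun i => (y + z) (Sum.inl i))
            = (fun i => y (Sum.inl i)) + (fun i => z (Sum.inl i)) := rfl
        show E₂ (fun i => (y + z) (Sum.inl i)) j = _
        rw [h, map_add]
        rfl
    | inr p =>
        have h : (fun i => (y + z) (Sum.inr (p.1, i)))
            = (fun i => y (Sum.inr (p.1, i))) + (fun i => z (Sum.inr (p.1, i))) := rfl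
        show E₄ (fun i => (y + z) (Sum.inr (p.1, i))) p.2 = _
        rw [h, map_add]
        rfl
  map_smul' c y := by
    funext w
    cases w with
    | inl j =>
        have h : (fun i => (c • y) (Sum.inl i)) = c • (fun i => y (Sum.inl i)) := rfl
        show E₂ (fun i => (c • y) (Sum.inl i)) j = _
        rw [h, _root_.map_smul]
        rfl
    | inr p =>
        have h : (fun i => (c • y) (Sum.inr (p.1, i)))
            = c • (fun i => y (Sum.inr (p.1, i))) := rfl
        show E₄ (fun i => (c • y) (Sum.inr (p.1, i))) p.2 = _
        rw [h, _root_.map_smul]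
        rfl
  left_inv y := by
    funext w
    cases w with
    | inl j =>
        show E₂.symm (E₂ (fun i => y (Sum.inl i))) j = y (Sum.inl j)
        rw [LinearEquiv.symm_apply_apply]
    | inr p =>
        show E₄.symm (E₄ (fun i => y (Sum.inr (p.1, i)))) p.2 = y (Sum.inr p)
        rw [LinearEquiv.symm_apply_apply]
  right_inv y := by
    funext w
    cases w with
    | inl j =>
        show E₂ (E₂.symm (fun i => y (Sum.inl i))) j = y (Sum.inl j)
        rw [LinearEquiv.apply_symm_apply]
    | inr p =>
        show E₄ (E₄.symm (fun i => y (Sum.inr (p.1, i)))) p.2 = y (Sum.inr p)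
        rw [LinearEquiv.apply_symm_apply]

lemma blockEquiv_apply_inl {k : ℕ} (E₂ : (Fin 2 → ℚ) ≃ₗ[ℚ] (Fin 2 → ℚ))
    (E₄ : (Fin 4 → ℚ) ≃ₗ[ℚ] (Fin 4 → ℚ)) (y : (Fin 2 ⊕ Fin k × Fin 4) → ℚ) (j : Fin 2) :
    blockEquiv E₂ E₄ y (Sum.inl j) = E₂ (fun i => y (Sum.inl i)) j := rfl

lemma blockEquiv_apply_inr {k : ℕ} (E₂ : (Fin 2 → ℚ) ≃ₗ[ℚ] (Fin 2 → ℚ))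
    (E₄ : (Fin 4 → ℚ) ≃ₗ[ℚ] (Fin 4 → ℚ)) (y : (Fin 2 ⊕ Fin k × Fin 4) → ℚ)
    (m : Fin k) (j : Fin 4) :
    blockEquiv E₂ E₄ y (Sum.inr (m, j)) = E₄ (fun i => y (Sum.inr (m, i))) j := rfl

/-- For `n ≥ 2` with `n ≡ 2 (mod 4)` and
`f₀(x) = -x₀² + x₁² + ⋯ + x_{n-1}²` on `ℚⁿ`, for every positive rational `a`
the scaled form `a·f₀` is equivalent to `f₀` over `ℚ`. -/
theorem scaled_form_equivalent_of_two_mod_four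
    (n : ℕ) (hn : 2 ≤ n) (hmod : n % 4 = 2)
    (f₀ : (Fin n → ℚ) → ℚ)
    (hf₀ : ∀ x, f₀ x = ∑ i : Fin n, (if i.val = 0 then (-1 : ℚ) else 1) * x i ^ 2)
    (a : ℚ) (ha : 0 < a) :
    ∃ T : (Fin n → ℚ) ≃ₗ[ℚ] (Fin n → ℚ), ∀ x, a * f₀ (T x) = f₀ x := by
  obtain ⟨p, q, r, s, hs⟩ := rat_sum_four_squares a ha.le
  obtain ⟨E₂, hE₂⟩ := exists_E2 a ha.ne'
  obtain ⟨E₄, hE₄⟩ := exists_E4 a ha.ne' p q r s hs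
  set k := n / 4 with hk
  have hnk : n = 2 + k * 4 := by omega
  let e : Fin n ≃ (Fin 2 ⊕ Fin k × Fin 4) :=
    (finCongr hnk).trans (finSumFinEquiv.symm.trans
      (Equiv.sumCongr (Equiv.refl (Fin 2)) finProdFinEquiv.symm))
  set S : (Fin 2 ⊕ Fin k × Fin 4) → ℚ := Sum.elim (fun j => if j = 0 then (-1 : ℚ) else 1) (fun _ => 1) with hS
  have hsign : ∀ i : Fin n, (if i.val = 0 then (-1 : ℚ) else 1) = S (e i) := by
    intro i
    obtain ⟨w, hw⟩ : ∃ w, e i = w := ⟨e i, rfl⟩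
    rw [hw]
    have hwv : i.val = (e.symm w).val := by rw [← hw, Equiv.symm_apply_apply]
    cases w with
    | inl j =>
        have h2 : (e.symm (Sum.inl j)).val = j.val := by
          simp [e, Equiv.sumCongr_symm, Equiv.sumCongr_apply, Sum.map_inl]
        rw [hwv, h2, hS]
        fin_cases j <;> simp
    | inr pp =>
        have h2 : (e.symm (Sum.inr pp)).val ≠ 0 := by
          simp [e, Equiv.sumCongr_symm, Equiv.sumCongr_apply, Sum.map_inr]
        rw [hwv, if_neg h2, hS]
        simp
  let L := blockEquiv (k := k) E₂ E₄
  refine ⟨((LinearEquiv.funCongrLeft ℚ ℚ e).symm.trans L).trans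
    (LinearEquiv.funCongrLeft ℚ ℚ e), ?_⟩
  intro x
  set y : (Fin 2 ⊕ Fin k × Fin 4) → ℚ := fun w => x (e.symm w) with hy
  have hsum : ∀ z : (Fin 2 ⊕ Fin k × Fin 4) → ℚ,
      ∑ i : Fin n, (if i.val = 0 then (-1 : ℚ) else 1) * (z (e i)) ^ 2
        = -(z (Sum.inl 0)) ^ 2 + (z (Sum.inl 1)) ^ 2
          + ∑ m : Fin k, ∑ j : Fin 4, (z (Sum.inr (m, j))) ^ 2 := by
    intro z
    have h1 : ∀ i : Fin n, (if i.val = 0 then (-1 : ℚ) else 1) * (z (e i)) ^ 2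
        = S (e i) * (z (e i)) ^ 2 := fun i => by rw [hsign]
    rw [Finset.sum_congr rfl (fun i _ => h1 i),
      Equiv.sum_comp e (fun w => S w * (z w) ^ 2), Fintype.sum_sum_type,
      Fin.sum_univ_two, Fintype.sum_prod_type]
    simp [hS]
    try ring
  have hTx : ∀ i : Fin n,
      (((LinearEquiv.funCongrLeft ℚ ℚ e).symm.trans L).trans
        (LinearEquiv.funCongrLeft ℚ ℚ e)) x i = L y (e i) := fun i => rfl
  have hx : ∀ i : Fin n, x i = y (e i) := by
    intro i; rw [hy]; simp
  have lhs1 : ∑ i : Fin n, (if i.val = 0 then (-1 : ℚ) else 1)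
        * ((((LinearEquiv.funCongrLeft ℚ ℚ e).symm.trans L).trans
          (LinearEquiv.funCongrLeft ℚ ℚ e)) x i) ^ 2
      = ∑ i : Fin n, (if i.val = 0 then (-1 : ℚ) else 1) * (L y (e i)) ^ 2 :=
    Finset.sum_congr rfl (fun i _ => by rw [hTx i])
  have rhs1 : ∑ i : Fin n, (if i.val = 0 then (-1 : ℚ) else 1) * (x i) ^ 2
      = ∑ i : Fin n, (if i.val = 0 then (-1 : ℚ) else 1) * (y (e i)) ^ 2 :=
    Finset.sum_congr rfl (fun i _ => by rw [hx i])
  rw [hf₀ x, hf₀, lhs1, rhs1, hsum (L y), hsum y]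
  have hL0 : L y (Sum.inl 0) = E₂ (fun i => y (Sum.inl i)) 0 := rfl
  have hL1 : L y (Sum.inl 1) = E₂ (fun i => y (Sum.inl i)) 1 := rfl
  have hLr : ∀ (m : Fin k) (j : Fin 4),
      L y (Sum.inr (m, j)) = E₄ (fun i => y (Sum.inr (m, i))) j := fun m j => rfl
  simp only [hL0, hL1, hLr]
  rw [mul_add, Finset.mul_sum, hE₂ (fun i => y (Sum.inl i))]
  simp only [hE₄]
end

section
/- Let n ≥ 2 be an integer with n ≡ 2 (mod 4), let f₀ be the quadratic form on ℚⁿ given by f₀(x) = -x₀² + x₁² + ⋯ + x_{n-1}², and for a positive rational a let f_a be the quadratic form on ℚ^{n+1} given by f_a(x) = f₀(x₀,…,x_{n-1}) + a·x_n². Then for all positive rationals a and b, the forms f_a and f_b are similar: b·f_a is equivalent to a·f_b over ℚ. -/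
/-!
With `n ≡ 2 (mod 4)`, the form `f₀ = -x₀² + x₁² + ⋯ + x_{n-1}²` is the orthogonal sum of the
hyperbolic plane `-x₀² + x₁²` and `(n - 2) / 4` copies of the sum of four squares, and each of
these summands is equivalent to its own multiple by any `c > 0`: the hyperbolic plane
`(x₁ - x₀)(x₁ + x₀)` by rescaling `x₁ - x₀` alone, the four squares by left multiplication with a
quaternion of norm `c` (which exists by Lagrange's four-square theorem), since the quaternion norm
is multiplicative. Hence `a • f₀ ≅ f₀ ≅ b • f₀`, and adding the common summand `a b x_n²` gives
`b • f_a ≅ a • f_b`.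
-/

open QuadraticMap Quaternion

theorem Fin.smul_append {α M : Type*} [SMul M α] {m k : ℕ} (c : M) (u : Fin m → α)
    (v : Fin k → α) : c • Fin.append u v = Fin.append (c • u) (c • v) := by
  funext i
  refine Fin.addCases (fun _ => ?_) (fun _ => ?_) i <;> simp

namespace Quaternion

variable {K : Type*} [Field K]

def mulLeftLinearEquiv (u : ℍ[K]) (hu : normSq u ≠ 0) : ℍ[K] ≃ₗ[K] ℍ[K] :=
  .ofLinearMap (LinearMap.mulLeft K u) (LinearMap.mulLeft K ((normSq u)⁻¹ • star u))
    (LinearMap.ext fun x => by simp [← mul_assoc, self_mul_star, coe_mul_eq_smul, smul_smul, hu])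
    (LinearMap.ext fun x => by simp [← mul_assoc, star_mul_self, coe_mul_eq_smul, smul_smul, hu])

theorem exists_normSq_eq_of_nonneg {c : ℚ} (hc : 0 ≤ c) : ∃ u : ℍ[ℚ], normSq u = c := by
  obtain ⟨p, q, r, s, h⟩ := Nat.sum_four_squares (c.num.toNat * c.den)
  have hnum : ((c.num.toNat : ℤ) : ℚ) = c.num := by
    rw [Int.toNat_of_nonneg (Rat.num_nonneg.mpr hc)]
  have hsum : (p : ℚ) ^ 2 + q ^ 2 + r ^ 2 + s ^ 2 = c.num * c.den := by
    rw [← hnum]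
    exact_mod_cast h
  let u : ℍ[ℚ] := ⟨p / c.den, q / c.den, r / c.den, s / c.den⟩
  have hu : normSq u = ((p : ℚ) ^ 2 + q ^ 2 + r ^ 2 + s ^ 2) / c.den ^ 2 := by
    rw [normSq_def']
    ring
  refine ⟨u, ?_⟩
  rw [hu, hsum, div_eq_iff (by positivity), ← Rat.mul_den_eq_num]
  ring

end Quaternion

namespace QuadraticMap

def lorentzWeights (R : Type*) [Neg R] [One R] (n : ℕ) : Fin n → R :=
  fun i => if i.val = 0 then -1 else 1

theorem lorentzWeights_two {R : Type*} [Neg R] [One R] : lorentzWeights R 2 = ![-1, 1] := by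
  ext i
  fin_cases i <;> simp [lorentzWeights]

theorem append_lorentzWeights_one {R : Type*} [Neg R] [One R] {m k : ℕ} (hm : m ≠ 0) :
    Fin.append (lorentzWeights R m) (1 : Fin k → R) = lorentzWeights R (m + k) := by
  funext i
  refine Fin.addCases (fun _ => ?_) (fun _ => ?_) i <;> simp [lorentzWeights, hm]

section Append

variable {R : Type*} [CommSemiring R]

theorem weightedSumSquares_smul {ι : Type*} [Fintype ι] (c : R) (w : ι → R) :
    weightedSumSquares R (c • w) = c • weightedSumSquares R w := by
  ext x
  simp [weightedSumSquares_apply, Finset.mul_sum, mul_assoc]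

variable {m k : ℕ}

def isometryEquivWeightedSumSquaresAppend (w₁ : Fin m → R) (w₂ : Fin k → R) :
    (weightedSumSquares R (Fin.append w₁ w₂)).IsometryEquiv
      ((weightedSumSquares R w₁).prod (weightedSumSquares R w₂)) where
  __ := Fin.appendEquiv m k |>.symm
  map_add' _ _ := rfl
  map_smul' _ _ := rfl
  map_app' x := by simp [weightedSumSquares_apply, Fin.sum_univ_add]

theorem Equivalent.weightedSumSquares_append {w₁ w₁' : Fin m → R} {w₂ w₂' : Fin k → R}
    (h₁ : (weightedSumSquares R w₁).Equivalent (weightedSumSquares R w₁'))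
    (h₂ : (weightedSumSquares R w₂).Equivalent (weightedSumSquares R w₂')) :
    (weightedSumSquares R (Fin.append w₁ w₂)).Equivalent
      (weightedSumSquares R (Fin.append w₁' w₂')) :=
  Equivalent.trans ⟨isometryEquivWeightedSumSquaresAppend w₁ w₂⟩ <|
    (h₁.prod h₂).trans ⟨(isometryEquivWeightedSumSquaresAppend w₁' w₂').symm⟩

end Append

variable {K : Type*} [Field K]

/-- Fixes `x₀ + x₁` and multiplies `x₁ - x₀` by `c`. -/
def hyperbolicScale (c : K) : (Fin 2 → K) →ₗ[K] (Fin 2 → K) :=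
  Matrix.toLin' !![(1 + c) / 2, (1 - c) / 2; (1 - c) / 2, (1 + c) / 2]

theorem hyperbolicScale_comp (h2 : (2 : K) ≠ 0) (c d : K) :
    hyperbolicScale c ∘ₗ hyperbolicScale d = hyperbolicScale (c * d) := by
  rw [hyperbolicScale, hyperbolicScale, hyperbolicScale, ← Matrix.toLin'_mul]
  congr 1
  ext i j
  fin_cases i <;> fin_cases j <;> simp [Matrix.mul_apply, Fin.sum_univ_two] <;> field_simp <;> ring

theorem hyperbolicScale_one (h2 : (2 : K) ≠ 0) : hyperbolicScale (1 : K) = LinearMap.id := by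
  rw [hyperbolicScale, ← Matrix.toLin'_one]
  congr 1
  ext i j
  fin_cases i <;> fin_cases j <;> simp [one_add_one_eq_two, h2]

theorem weightedSumSquares_hyperbolicScale (h2 : (2 : K) ≠ 0) (c : K) (x : Fin 2 → K) :
    weightedSumSquares K (![-1, 1] : Fin 2 → K) (hyperbolicScale c x) =
      weightedSumSquares K (c • ![-1, 1] : Fin 2 → K) x := by
  simp only [hyperbolicScale, Matrix.toLin'_apply, Matrix.mulVec, dotProduct, Matrix.of_apply,
    weightedSumSquares_apply, Fin.sum_univ_two, Matrix.cons_val_zero, Matrix.cons_val_one,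
    Matrix.smul_cons, Matrix.smul_empty, smul_eq_mul]
  field_simp
  ring

theorem equivalent_weightedSumSquares_hyperbolic_smul (h2 : (2 : K) ≠ 0) {c : K} (hc : c ≠ 0) :
    (weightedSumSquares K (![-1, 1] : Fin 2 → K)).Equivalent
      (weightedSumSquares K (c • ![-1, 1] : Fin 2 → K)) := by
  have hinv (d : K) (hd : d ≠ 0) : hyperbolicScale d ∘ₗ hyperbolicScale d⁻¹ = LinearMap.id := by
    rw [hyperbolicScale_comp h2, mul_inv_cancel₀ hd, hyperbolicScale_one h2]
  let e : (Fin 2 → K) ≃ₗ[K] (Fin 2 → K) := .ofLinearMap (hyperbolicScale c)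
    (hyperbolicScale c⁻¹) (hinv c hc) (by simpa using hinv c⁻¹ (inv_ne_zero hc))
  exact ⟨IsometryEquiv.symm ⟨e, weightedSumSquares_hyperbolicScale h2 c⟩⟩

theorem equivalent_weightedSumSquares_four_smul_normSq (u : ℍ[K]) (hu : normSq u ≠ 0) :
    (weightedSumSquares K (1 : Fin 4 → K)).Equivalent
      (weightedSumSquares K (normSq u • 1 : Fin 4 → K)) := by
  let e : ℍ[K] ≃ₗ[K] (Fin 4 → K) := QuaternionAlgebra.linearEquivTuple _ _ _
  have hsum (q : ℍ[K]) : weightedSumSquares K (1 : Fin 4 → K) (e q) = normSq q := by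
    have he : e q = ![q.re, q.imI, q.imJ, q.imK] := rfl
    simp [he, weightedSumSquares_apply, Fin.sum_univ_four, normSq_def', _root_.sq]
  refine ⟨IsometryEquiv.symm ⟨e.symm ≪≫ₗ mulLeftLinearEquiv u hu ≪≫ₗ e, fun x => ?_⟩⟩
  obtain ⟨q, rfl⟩ := e.surjective x
  simp [mulLeftLinearEquiv, hsum, weightedSumSquares_smul]

theorem equivalent_weightedSumSquares_lorentzWeights_smul (h2 : (2 : K) ≠ 0) {u : ℍ[K]}
    (hu : normSq u ≠ 0) {n : ℕ} (hn : n % 4 = 2) :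
    (weightedSumSquares K (lorentzWeights K n)).Equivalent
      (weightedSumSquares K (normSq u • lorentzWeights K n)) := by
  obtain ⟨k, rfl⟩ : ∃ k, n = 4 * k + 2 := ⟨n / 4, by omega⟩
  induction k with
  | zero =>
    rw [lorentzWeights_two]
    exact equivalent_weightedSumSquares_hyperbolic_smul h2 hu
  | succ k ih =>
    rw [show 4 * (k + 1) + 2 = 4 * k + 2 + 4 by ring, ← append_lorentzWeights_one (by omega),
      Fin.smul_append]
    exact (ih (by omega)).weightedSumSquares_append
      (equivalent_weightedSumSquares_four_smul_normSq u hu)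

end QuadraticMap

theorem forms_similar_of_two_mod_four_general
    (n : ℕ) (hmod : n % 4 = 2)
    (a b : ℚ) (ha : 0 < a) (hb : 0 < b)
    (fa fb : (Fin (n + 1) → ℚ) → ℚ)
    (hfa : ∀ x, fa x =
      (∑ i : Fin n, (if i.val = 0 then (-1 : ℚ) else 1) * x i.castSucc ^ 2)
        + a * x (Fin.last n) ^ 2)
    (hfb : ∀ x, fb x =
      (∑ i : Fin n, (if i.val = 0 then (-1 : ℚ) else 1) * x i.castSucc ^ 2)
        + b * x (Fin.last n) ^ 2) :
    ∃ T : (Fin (n + 1) → ℚ) ≃ₗ[ℚ] (Fin (n + 1) → ℚ),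
      ∀ x, a * fb (T x) = b * fa x := by
  obtain ⟨ua, rfl⟩ := exists_normSq_eq_of_nonneg ha.le
  obtain ⟨ub, rfl⟩ := exists_normSq_eq_of_nonneg hb.le
  have hL {u : ℍ[ℚ]} (hu : 0 < normSq u) :=
    equivalent_weightedSumSquares_lorentzWeights_smul two_ne_zero hu.ne' hmod
  obtain ⟨e⟩ := ((hL hb).symm.trans (hL ha)).weightedSumSquares_append
    (.refl (weightedSumSquares ℚ ![normSq ua * normSq ub]))
  have hform (c d : ℚ) (x : Fin (n + 1) → ℚ) :
      weightedSumSquares ℚ (Fin.append (c • lorentzWeights ℚ n) ![c * d]) x =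
        c * ((∑ i : Fin n, (if i.val = 0 then (-1 : ℚ) else 1) * x i.castSucc ^ 2) +
          d * x (Fin.last n) ^ 2) := by
    simp only [weightedSumSquares_apply, Fin.append_right_eq_snoc, Fin.sum_univ_castSucc,
      Fin.snoc_castSucc, Fin.snoc_last, Pi.smul_apply, lorentzWeights, smul_eq_mul, mul_add,
      Finset.mul_sum, Matrix.cons_val_zero]
    congr 1
    · exact Finset.sum_congr rfl fun _ _ => by ring
    · ring
  refine ⟨e.toLinearEquiv, fun x => ?_⟩
  rw [hfa, hfb, ← hform, ← hform, mul_comm (normSq ub)]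
  exact e.map_app x

/-- For `n ≥ 2` with `n ≡ 2 (mod 4)`,
`f₀(x) = -x₀² + x₁² + ⋯ + x_{n-1}²` on `ℚⁿ`, and `f_a = f₀ + a·x_n²` on `ℚ^{n+1}`,
for all positive rationals `a, b` the forms `f_a` and `f_b` are similar:
`b·f_a` is equivalent to `a·f_b` over `ℚ`. -/
theorem forms_similar_of_two_mod_four
    (n : ℕ) (hn : 2 ≤ n) (hmod : n % 4 = 2)
    (a b : ℚ) (ha : 0 < a) (hb : 0 < b)
    (fa fb : (Fin (n + 1) → ℚ) → ℚ)
    (hfa : ∀ x, fa x =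
      (∑ i : Fin n, (if i.val = 0 then (-1 : ℚ) else 1) * x i.castSucc ^ 2)
        + a * x (Fin.last n) ^ 2)
    (hfb : ∀ x, fb x =
      (∑ i : Fin n, (if i.val = 0 then (-1 : ℚ) else 1) * x i.castSucc ^ 2)
        + b * x (Fin.last n) ^ 2) :
    ∃ T : (Fin (n + 1) → ℚ) ≃ₗ[ℚ] (Fin (n + 1) → ℚ),
      ∀ x, a * fb (T x) = b * fa x :=
  forms_similar_of_two_mod_four_general n hmod a b ha hb fa fb hfa hfb
end

section
/- Let n ≥ 4 be an integer with n ≡ 0 (mod 4), and let f₀ be the quadratic form on ℚⁿ given by f₀(x) = -x₀² + x₁² + ⋯ + x_{n-1}². Then for every prime number p with p ≡ 1 (mod 4), the scaled form p·f₀ is equivalent to f₀ over ℚ. -/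
/-!
Write `p = a² + b²` (Fermat) and split the coordinates into the pairs `(x₂ᵢ, x₂ᵢ₊₁)`, which is
possible since `n` is even. The first pair carries the hyperbolic plane `-x₀² + x₁²`, which is
similar to itself with any nonzero multiplier. Every other pair carries `x² + y²`, and the
two-square identity `(a x + b y)² + (a y - b x)² = (a² + b²)(x² + y²)` shows that it is similar
to itself with multiplier `p`. The block-diagonal map built from these similarities takes
`p · f₀` to `f₀`.
-/

open Matrix

/-- The scaled form `c • q` is equivalent to `q`. -/
def ScaleEquivalent {K V : Type*} [CommRing K] [AddCommGroup V] [Module K V]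
    (c : K) (q : V → K) : Prop :=
  ∃ T : V ≃ₗ[K] V, ∀ x, c * q (T x) = q x

namespace ScaleEquivalent

variable {K : Type*} [CommRing K] {c : K}

theorem comp_linearEquiv {V W : Type*} [AddCommGroup V] [Module K V] [AddCommGroup W]
    [Module K W] {q : V → K} (h : ScaleEquivalent c q) (e : W ≃ₗ[K] V) :
    ScaleEquivalent c (q ∘ e) := by
  obtain ⟨T, hT⟩ := h
  exact ⟨e.trans (T.trans e.symm), fun x => by simpa using hT (e x)⟩

theorem sum_pi {ι : Type*} [Fintype ι] {V : ι → Type*} [∀ i, AddCommGroup (V i)]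
    [∀ i, Module K (V i)] {q : ∀ i, V i → K} (h : ∀ i, ScaleEquivalent c (q i)) :
    ScaleEquivalent c (fun x : ∀ i, V i => ∑ i, q i (x i)) := by
  choose T hT using h
  refine ⟨LinearEquiv.piCongrRight T, fun x => ?_⟩
  simp only [LinearEquiv.piCongrRight_apply, Finset.mul_sum, hT]

theorem of_mulVec {ι : Type*} [Fintype ι] [DecidableEq ι] {q : (ι → K) → K}
    (M : Matrix ι ι K) (hM : IsUnit M.det) (h : ∀ x, c * q (M *ᵥ x) = q x) :
    ScaleEquivalent c q :=
  ⟨M.toLinearEquiv' (M.invertibleOfIsUnitDet hM), h⟩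

end ScaleEquivalent

section Plane

variable {K : Type*} [Field K]

theorem scaleEquivalent_neg_sq_add_sq {c : K} (hc : c ≠ 0) (h2 : (2 : K) ≠ 0) :
    ScaleEquivalent c (fun u : Fin 2 → K => -u 0 ^ 2 + u 1 ^ 2) := by
  -- In the null coordinates `u₁ ∓ u₀` the form is a product; divide the first factor by `c`.
  refine .of_mulVec !![(1 + c⁻¹) / 2, (1 - c⁻¹) / 2; (1 - c⁻¹) / 2, (1 + c⁻¹) / 2] ?_ ?_
  · rw [det_fin_two_of, isUnit_iff_ne_zero]
    convert inv_ne_zero hc using 1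
    field_simp
    ring
  · intro u
    simp only [mulVec, dotProduct, Fin.sum_univ_two, of_apply, cons_val', cons_val_zero,
      cons_val_one, empty_val', cons_val_fin_one]
    field_simp
    ring

theorem scaleEquivalent_sq_add_sq {a b : K} (hab : a ^ 2 + b ^ 2 ≠ 0) :
    ScaleEquivalent (a ^ 2 + b ^ 2) (fun u : Fin 2 → K => u 0 ^ 2 + u 1 ^ 2) := by
  set c := a ^ 2 + b ^ 2
  refine .of_mulVec !![a / c, b / c; -b / c, a / c] ?_ ?_
  · rw [det_fin_two_of, isUnit_iff_ne_zero]
    convert inv_ne_zero hab using 1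
    field_simp
    ring
  · intro u
    simp only [mulVec, dotProduct, Fin.sum_univ_two, of_apply, cons_val', cons_val_zero,
      cons_val_one, empty_val', cons_val_fin_one]
    field_simp
    ring

end Plane

section Pairs

variable (K : Type*) [CommRing K]

/-- The coordinates `2 * i` and `2 * i + 1` of `Fin (k * 2) → K` form the `i`-th pair. -/
def pairCoords (k : ℕ) : (Fin k → Fin 2 → K) ≃ₗ[K] (Fin (k * 2) → K) :=
  (LinearEquiv.curry K K (Fin k) (Fin 2)).symm.trans
    (LinearEquiv.funCongrLeft K K finProdFinEquiv.symm)

variable {K}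

def pairForm {k : ℕ} (i : Fin k) (u : Fin 2 → K) : K :=
  if i.val = 0 then -u 0 ^ 2 + u 1 ^ 2 else u 0 ^ 2 + u 1 ^ 2

@[simp]
theorem pairCoords_apply_finProdFinEquiv {k : ℕ} (y : Fin k → Fin 2 → K) (i : Fin k)
    (t : Fin 2) : pairCoords K k y (finProdFinEquiv (i, t)) = y i t := by
  simp [pairCoords]

theorem sum_sign_mul_sq_pairCoords {k : ℕ} (y : Fin k → Fin 2 → K) :
    ∑ j : Fin (k * 2), (if j.val = 0 then (-1 : K) else 1) * pairCoords K k y j ^ 2 =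
      ∑ i, pairForm i (y i) := by
  rw [← finProdFinEquiv.sum_comp, Fintype.sum_prod_type]
  refine Finset.sum_congr rfl fun i _ => ?_
  simp only [pairCoords_apply_finProdFinEquiv, finProdFinEquiv_apply_val, Fin.sum_univ_two]
  rcases eq_or_ne (i : ℕ) 0 with hi | hi <;> simp [pairForm, hi]

end Pairs

theorem scaled_form_equivalent_of_zero_mod_four_general
    (n : ℕ) (hmod : n % 4 = 0)
    (f₀ : (Fin n → ℚ) → ℚ)
    (hf₀ : ∀ x, f₀ x = ∑ i : Fin n, (if i.val = 0 then (-1 : ℚ) else 1) * x i ^ 2)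
    (p : ℕ) (hp : p.Prime) (hp1 : p % 4 = 1) :
    ∃ T : (Fin n → ℚ) ≃ₗ[ℚ] (Fin n → ℚ), ∀ x, (p : ℚ) * f₀ (T x) = f₀ x := by
  have : Fact p.Prime := ⟨hp⟩
  obtain ⟨a, b, hab⟩ := Nat.Prime.sq_add_sq (p := p) (by omega)
  have hp' : (p : ℚ) = (a : ℚ) ^ 2 + (b : ℚ) ^ 2 := by exact_mod_cast hab.symm
  have hp0 : (p : ℚ) ≠ 0 := by exact_mod_cast hp.ne_zero
  obtain ⟨k, rfl⟩ : ∃ k, n = k * 2 := ⟨n / 2, by omega⟩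
  have hpairs : ScaleEquivalent (p : ℚ) (f₀ ∘ pairCoords ℚ k) := by
    rw [show f₀ ∘ pairCoords ℚ k = _ from
      funext fun y => (hf₀ _).trans (sum_sign_mul_sq_pairCoords y)]
    refine .sum_pi fun i => ?_
    unfold pairForm
    split_ifs
    · exact scaleEquivalent_neg_sq_add_sq hp0 two_ne_zero
    · rw [hp']
      exact scaleEquivalent_sq_add_sq (hp' ▸ hp0)
  simpa [ScaleEquivalent] using hpairs.comp_linearEquiv (pairCoords ℚ k).symm

/-- For `n ≥ 4` with `n ≡ 0 (mod 4)` and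
`f₀(x) = -x₀² + x₁² + ⋯ + x_{n-1}²` on `ℚⁿ`, for every prime `p ≡ 1 (mod 4)`
the scaled form `p·f₀` is equivalent to `f₀` over `ℚ`. -/
theorem scaled_form_equivalent_of_zero_mod_four
    (n : ℕ) (hn : 4 ≤ n) (hmod : n % 4 = 0)
    (f₀ : (Fin n → ℚ) → ℚ)
    (hf₀ : ∀ x, f₀ x = ∑ i : Fin n, (if i.val = 0 then (-1 : ℚ) else 1) * x i ^ 2)
    (p : ℕ) (hp : p.Prime) (hp1 : p % 4 = 1) :
    ∃ T : (Fin n → ℚ) ≃ₗ[ℚ] (Fin n → ℚ), ∀ x, (p : ℚ) * f₀ (T x) = f₀ x :=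
  scaled_form_equivalent_of_zero_mod_four_general n hmod f₀ hf₀ p hp hp1
end

section
/- Let n ≥ 4 be an integer with n ≡ 0 (mod 4), let f₀ be the quadratic form on ℚⁿ given by f₀(x) = -x₀² + x₁² + ⋯ + x_{n-1}², and for a positive rational a let f_a be the quadratic form on ℚ^{n+1} given by f_a(x) = f₀(x₀,…,x_{n-1}) + a·x_n². Then for all prime numbers p and q with p ≡ q ≡ 1 (mod 4), the forms f_p and f_q are similar: q·f_p is equivalent to p·f_q over ℚ. -/
/-!
Put `r = q / p`. By Fermat's two-squares theorem and the Brahmagupta–Fibonacci identity,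
`r = s² + t²`, so `[[s, -t], [t, s]]` scales `x² + y²` by its determinant `r`, while
`[[u, v], [v, u]]` with `u = (r + 1) / 2`, `v = (r - 1) / 2` scales the hyperbolic plane
`-x² + y²` by `u² - v² = r`. Since `n` is even, `f₀` splits into one hyperbolic plane and
`n / 2 - 1` definite planes, and these blocks give `B` with `f₀ ∘ B = r • f₀`. Extending `B` by
the identity on the last coordinate, `p • f_q (T x) = p • (r • f₀ + q x_n²) = q • f_p x`.
-/

open Matrix

namespace FormsSimilar

variable {K : Type*} [Field K]

theorem exists_sq_add_sq_eq_div {a b c d p q : K} (hp : a ^ 2 + b ^ 2 = p)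
    (hq : c ^ 2 + d ^ 2 = q) : ∃ s t : K, s ^ 2 + t ^ 2 = q / p := by
  subst hp hq
  refine ⟨(a * c + b * d) / (a ^ 2 + b ^ 2), (a * d - b * c) / (a ^ 2 + b ^ 2), ?_⟩
  rcases eq_or_ne (a ^ 2 + b ^ 2) 0 with h | h
  · simp [h]
  · field_simp
    ring

def lorentzForm {n : ℕ} (y : Fin n → K) : K :=
  ∑ i, (if i.val = 0 then -1 else 1) * y i ^ 2

def binaryForm (ε : K) (z : Fin 2 → K) : K :=
  ε * z 0 ^ 2 + z 1 ^ 2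

theorem binaryForm_mulVec_hyperbolic (u v : K) (z : Fin 2 → K) :
    binaryForm (-1) (!![u, v; v, u] *ᵥ z) = (u ^ 2 - v ^ 2) * binaryForm (-1) z := by
  simp only [binaryForm, mulVec, dotProduct, Fin.sum_univ_two, of_apply, cons_val', cons_val_zero,
    cons_val_one, cons_val_fin_one]
  ring

theorem binaryForm_mulVec_rotation (s t : K) (z : Fin 2 → K) :
    binaryForm 1 (!![s, -t; t, s] *ᵥ z) = (s ^ 2 + t ^ 2) * binaryForm 1 z := by
  simp only [binaryForm, mulVec, dotProduct, Fin.sum_univ_two, of_apply, cons_val', cons_val_zero,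
    cons_val_one, cons_val_fin_one]
  ring

theorem exists_det_eq_and_binaryForm_mulVec [NeZero (2 : K)] {ε r s t : K}
    (hε : ε = -1 ∨ ε = 1) (hst : s ^ 2 + t ^ 2 = r) :
    ∃ A : Matrix (Fin 2) (Fin 2) K, A.det = r ∧ ∀ z, binaryForm ε (A *ᵥ z) = r * binaryForm ε z := by
  rcases hε with rfl | rfl
  · have huv : ((r + 1) / 2) ^ 2 - ((r - 1) / 2) ^ 2 = r := by field_simp; ring
    refine ⟨!![(r + 1) / 2, (r - 1) / 2; (r - 1) / 2, (r + 1) / 2], ?_, fun z => ?_⟩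
    · rw [det_fin_two_of]; linear_combination huv
    · rw [binaryForm_mulVec_hyperbolic, huv]
  · refine ⟨!![s, -t; t, s], ?_, fun z => ?_⟩
    · rw [det_fin_two_of, ← hst]; ring
    · rw [binaryForm_mulVec_rotation, hst]

-- Coordinate `2 * k + j` becomes entry `j` of block `k`.
def pairEquiv (m : ℕ) : (Fin (m * 2) → K) ≃ₗ[K] (Fin m → Fin 2 → K) :=
  (LinearEquiv.funCongrLeft K K finProdFinEquiv).trans (LinearEquiv.curry K K _ _)

theorem lorentzForm_eq_sum_binaryForm {m : ℕ} (y : Fin (m * 2) → K) :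
    lorentzForm y = ∑ k : Fin m, binaryForm (if k.val = 0 then -1 else 1) (pairEquiv m y k) := by
  rw [lorentzForm, ← finProdFinEquiv.sum_comp, Fintype.sum_prod_type]
  refine Finset.sum_congr rfl fun k _ => ?_
  simp [binaryForm, pairEquiv, Fin.sum_univ_two, LinearEquiv.funCongrLeft_apply]


theorem exists_linearEquiv_lorentzForm_eq_mul [NeZero (2 : K)] (m : ℕ) {r s t : K} (hr : r ≠ 0)
    (hst : s ^ 2 + t ^ 2 = r) :
    ∃ B : (Fin (m * 2) → K) ≃ₗ[K] (Fin (m * 2) → K), ∀ y, lorentzForm (B y) = r * lorentzForm y := by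
  choose A hdet hA using fun k : Fin m =>
    exists_det_eq_and_binaryForm_mulVec (ε := if k.val = 0 then -1 else 1) (by split_ifs <;> simp) hst
  let blocks := LinearEquiv.piCongrRight fun k =>
    (A k).toLinearEquiv (Pi.basisFun K (Fin 2)) (by simp [hdet, hr])
  refine ⟨(pairEquiv m).trans (blocks.trans (pairEquiv m).symm), fun y => ?_⟩
  simp only [lorentzForm_eq_sum_binaryForm, LinearEquiv.trans_apply, LinearEquiv.apply_symm_apply,
    Finset.mul_sum, blocks, LinearEquiv.piCongrRight_apply, toLinearEquiv_apply, toLin_eq_toLin',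
    toLin'_apply, hA]

def _root_.LinearEquiv.snocLast {R M : Type*} [Semiring R] [AddCommMonoid M] [Module R M] {n : ℕ}
    (B : (Fin n → M) ≃ₗ[R] (Fin n → M)) : (Fin (n + 1) → M) ≃ₗ[R] (Fin (n + 1) → M) where
  toFun x := Fin.snoc (B (Fin.init x)) (x (Fin.last n))
  invFun x := Fin.snoc (B.symm (Fin.init x)) (x (Fin.last n))
  map_add' x y := by
    ext i
    refine Fin.lastCases ?_ (fun i => ?_) i
    · simp
    · simp only [Fin.snoc_castSucc, Pi.add_apply]
      exact congrFun (map_add B (Fin.init x) (Fin.init y)) i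
  map_smul' c x := by
    ext i
    refine Fin.lastCases ?_ (fun i => ?_) i
    · simp
    · simp only [Fin.snoc_castSucc, Pi.smul_apply, RingHom.id_apply]
      exact congrFun (map_smul B c (Fin.init x)) i
  left_inv x := by simp
  right_inv x := by simp

end FormsSimilar

open FormsSimilar

theorem forms_similar_of_zero_mod_four_general
    (n : ℕ) (hmod : n % 4 = 0)
    (p q : ℕ) (hp : p.Prime) (hq : q.Prime) (hp1 : p % 4 = 1) (hq1 : q % 4 = 1)
    (fp fq : (Fin (n + 1) → ℚ) → ℚ)
    (hfp : ∀ x, fp x =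
      (∑ i : Fin n, (if i.val = 0 then (-1 : ℚ) else 1) * x i.castSucc ^ 2)
        + (p : ℚ) * x (Fin.last n) ^ 2)
    (hfq : ∀ x, fq x =
      (∑ i : Fin n, (if i.val = 0 then (-1 : ℚ) else 1) * x i.castSucc ^ 2)
        + (q : ℚ) * x (Fin.last n) ^ 2) :
    ∃ T : (Fin (n + 1) → ℚ) ≃ₗ[ℚ] (Fin (n + 1) → ℚ),
      ∀ x, (p : ℚ) * fq (T x) = (q : ℚ) * fp x := by
  obtain ⟨m, rfl⟩ : ∃ m, n = m * 2 := ⟨n / 2, by omega⟩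
  have := Fact.mk hp
  have := Fact.mk hq
  obtain ⟨a, b, hab⟩ := Nat.Prime.sq_add_sq (p := p) (by omega)
  obtain ⟨c, d, hcd⟩ := Nat.Prime.sq_add_sq (p := q) (by omega)
  have hp0 : (p : ℚ) ≠ 0 := by exact_mod_cast hp.ne_zero
  have hq0 : (q : ℚ) ≠ 0 := by exact_mod_cast hq.ne_zero
  obtain ⟨s, t, hst⟩ := exists_sq_add_sq_eq_div (K := ℚ)
    (show (a : ℚ) ^ 2 + (b : ℚ) ^ 2 = p by exact_mod_cast hab)
    (show (c : ℚ) ^ 2 + (d : ℚ) ^ 2 = q by exact_mod_cast hcd)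
  obtain ⟨B, hB⟩ := exists_linearEquiv_lorentzForm_eq_mul m (div_ne_zero hq0 hp0) hst
  refine ⟨B.snocLast, fun x => ?_⟩
  have hBx : lorentzForm (B (Fin.init x)) = q / p * lorentzForm (Fin.init x) := hB _
  simp only [lorentzForm, Fin.init] at hBx
  simp only [hfp, hfq, LinearEquiv.snocLast, LinearEquiv.coe_mk, LinearMap.coe_mk, AddHom.coe_mk,
    Fin.snoc_castSucc, Fin.snoc_last, hBx]
  field_simp

/-- For `n ≥ 4` with `n ≡ 0 (mod 4)`,
`f₀(x) = -x₀² + x₁² + ⋯ + x_{n-1}²` on `ℚⁿ`, and `f_a = f₀ + a·x_n²` on `ℚ^{n+1}`,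
for all primes `p ≡ q ≡ 1 (mod 4)` the forms `f_p` and `f_q` are similar:
`q·f_p` is equivalent to `p·f_q` over `ℚ`. -/
theorem forms_similar_of_zero_mod_four
    (n : ℕ) (hn : 4 ≤ n) (hmod : n % 4 = 0)
    (p q : ℕ) (hp : p.Prime) (hq : q.Prime) (hp1 : p % 4 = 1) (hq1 : q % 4 = 1)
    (fp fq : (Fin (n + 1) → ℚ) → ℚ)
    (hfp : ∀ x, fp x =
      (∑ i : Fin n, (if i.val = 0 then (-1 : ℚ) else 1) * x i.castSucc ^ 2)
        + (p : ℚ) * x (Fin.last n) ^ 2)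
    (hfq : ∀ x, fq x =
      (∑ i : Fin n, (if i.val = 0 then (-1 : ℚ) else 1) * x i.castSucc ^ 2)
        + (q : ℚ) * x (Fin.last n) ^ 2) :
    ∃ T : (Fin (n + 1) → ℚ) ≃ₗ[ℚ] (Fin (n + 1) → ℚ),
      ∀ x, (p : ℚ) * fq (T x) = (q : ℚ) * fp x :=
  forms_similar_of_zero_mod_four_general n hmod p q hp hq hp1 hq1 fp fq hfp hfq
end

section
/- Let k be a field of characteristic ≠ 2, let m be an odd positive integer, and let q be a nondegenerate quadratic form on kᵐ. Let a₁, a₂, λ be nonzero elements of k, and let q ⊥ ⟨aᵢ⟩ denote the quadratic form on k^{m+1} given by (x, t) ↦ q(x) + aᵢ·t². If q ⊥ ⟨a₁⟩ is equivalent over k to λ·(q ⊥ ⟨a₂⟩), then a₁·a₂ is a square in k. -/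
/-- Let `k` be a field of characteristic `≠ 2`, `m` an odd positive
integer, `q` a nondegenerate quadratic form on `kᵐ`, and `a₁, a₂, λ` nonzero
elements of `k`. If `q ⊥ ⟨a₁⟩` is equivalent over `k` to `λ·(q ⊥ ⟨a₂⟩)`, then
`a₁·a₂` is a square in `k`. -/
theorem mul_isSquare_of_equiv_odd_dim
    (k : Type*) [Field k] (h2 : (2 : k) ≠ 0)
    (m : ℕ) (hm : Odd m) (hmpos : 0 < m)
    (q : QuadraticForm k (Fin m → k))
    (hq : ∀ x, (∀ y, QuadraticMap.polar q x y = 0) → x = 0)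
    (a₁ a₂ lam : k) (ha₁ : a₁ ≠ 0) (ha₂ : a₂ ≠ 0) (hlam : lam ≠ 0)
    (hequiv : ∃ T : (Fin (m + 1) → k) ≃ₗ[k] (Fin (m + 1) → k),
      ∀ x, lam * (q (fun j : Fin m => T x j.castSucc) + a₂ * T x (Fin.last m) ^ 2)
        = q (fun j : Fin m => x j.castSucc) + a₁ * x (Fin.last m) ^ 2) :
    IsSquare (a₁ * a₂) := by
  classical
  obtain ⟨T, hT⟩ := hequiv
  set r : (Fin (m + 1) → k) →ₗ[k] (Fin m → k) := LinearMap.funLeft k k Fin.castSucc with hrdef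
  set L : (Fin (m + 1) → k) →ₗ[k] k := LinearMap.proj (Fin.last m) with hLdef
  have hr_apply : ∀ x : Fin (m+1) → k, r x = fun j : Fin m => x j.castSucc := fun x => rfl
  set Bq : LinearMap.BilinForm k (Fin m → k) := QuadraticMap.polarBilin q with hBq
  set S : LinearMap.BilinForm k (Fin (m + 1) → k) := (LinearMap.mul k k).compl₁₂ L L with hS
  have hS_apply : ∀ x y : Fin (m+1) → k, S x y = x (Fin.last m) * y (Fin.last m) := fun x y => rfl
  set B₁ : LinearMap.BilinForm k (Fin (m + 1) → k) := Bq.comp r r + (2*a₁) • S with hB₁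
  set B₂ : LinearMap.BilinForm k (Fin (m + 1) → k) :=
    lam • (Bq.comp r r + (2*a₂) • S) with hB₂
  have hB₁_apply : ∀ x y, B₁ x y
      = QuadraticMap.polar q (r x) (r y) + 2*a₁ * (x (Fin.last m) * y (Fin.last m)) := by
    intro x y
    simp [hB₁, LinearMap.BilinForm.comp_apply, hS_apply, mul_assoc, hBq, QuadraticMap.polarBilin_apply_apply]
  have hB₂_apply : ∀ x y, B₂ x y
      = lam * (QuadraticMap.polar q (r x) (r y) + 2*a₂ * (x (Fin.last m) * y (Fin.last m))) := by
    intro x y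
    simp [hB₂, LinearMap.BilinForm.comp_apply, hS_apply, mul_assoc, mul_add, hBq, QuadraticMap.polarBilin_apply_apply]
  -- key congruence
  have hcomp : B₂.comp T.toLinearMap T.toLinearMap = B₁ := by
    refine LinearMap.ext₂ fun x y => ?_
    rw [LinearMap.BilinForm.comp_apply, hB₂_apply, hB₁_apply]
    have e1 := hT x
    have e2 := hT y
    have e3 := hT (x + y)
    rw [map_add T] at e3
    have hradd : ∀ u v : Fin (m+1) → k, r (u + v) = r u + r v := fun u v => map_add r u v
    simp only [← hr_apply] at e1 e2 e3
    rw [hradd] at e3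
    have hTadd : (T x + T y) (Fin.last m) = T x (Fin.last m) + T y (Fin.last m) := rfl
    have hxy : (x + y) (Fin.last m) = x (Fin.last m) + y (Fin.last m) := rfl
    rw [hTadd, hxy] at e3
    have hrxy : r (x + y) = r x + r y := hradd x y
    rw [hrxy] at e3
    unfold QuadraticMap.polar
    linear_combination e3 - e1 - e2
  -- matrices
  set A : Matrix (Fin (m+1)) (Fin (m+1)) k := LinearMap.toMatrix' T.toLinearMap with hA
  set Mq : Matrix (Fin m) (Fin m) k := LinearMap.BilinForm.toMatrix' Bq with hMq
  have hsingle_r : ∀ i : Fin m, r ((Pi.single (Fin.castSucc i) (1:k) : Fin (m+1) → k)) = Pi.single i 1 := by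
    intro i
    funext j
    rw [hr_apply]
    simp [Pi.single_apply, Fin.castSucc_inj]
  have hsingle_r_last : r ((Pi.single (Fin.last m) (1:k) : Fin (m+1) → k)) = 0 := by
    funext j
    rw [hr_apply]
    simp [Pi.single_apply, (Fin.castSucc_lt_last j).ne]
  have hsingle_last : ∀ i : Fin m, (Pi.single (Fin.castSucc i) (1:k) : Fin (m+1) → k) (Fin.last m) = 0 := by
    intro i
    simp [Pi.single_apply, (Fin.castSucc_lt_last i).ne']
  have hblock : ∀ a : k, LinearMap.BilinForm.toMatrix' (Bq.comp r r + (2*a) • S)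
      = (Matrix.fromBlocks Mq 0 0 (Matrix.diagonal fun _ : Fin 1 => 2*a)).submatrix
          finSumFinEquiv.symm finSumFinEquiv.symm := by
    intro a
    ext i j
    rw [LinearMap.BilinForm.toMatrix'_apply]
    have happ : ∀ x y, (Bq.comp r r + (2*a) • S) x y
        = Bq (r x) (r y) + 2*a * (x (Fin.last m) * y (Fin.last m)) := by
      intro x y
      simp [LinearMap.BilinForm.comp_apply, hS_apply, mul_assoc]
    rw [happ]
    induction i using Fin.lastCases with
    | last =>
      induction j using Fin.lastCases with
      | last =>
        rw [hsingle_r_last]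
        simp [Matrix.submatrix_apply]
      | cast j =>
        rw [hsingle_r_last]
        have : finSumFinEquiv.symm (Fin.castSucc j) = Sum.inl j :=
          finSumFinEquiv_symm_apply_castAdd j
        simp [Matrix.submatrix_apply, this, hsingle_last j]
    | cast i =>
      induction j using Fin.lastCases with
      | last =>
        rw [hsingle_r_last]
        have : finSumFinEquiv.symm (Fin.castSucc i) = Sum.inl i :=
          finSumFinEquiv_symm_apply_castAdd i
        simp [Matrix.submatrix_apply, this, hsingle_last i]
      | cast j =>
        have hi : finSumFinEquiv.symm (Fin.castSucc i) = Sum.inl i :=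
          finSumFinEquiv_symm_apply_castAdd i
        have hj : finSumFinEquiv.symm (Fin.castSucc j) = Sum.inl j :=
          finSumFinEquiv_symm_apply_castAdd j
        rw [hsingle_r i, hsingle_r j]
        simp [Matrix.submatrix_apply, hi, hj, hsingle_last i, hsingle_last j, hMq,
          LinearMap.BilinForm.toMatrix'_apply]
  have hdet_block : ∀ a : k, (LinearMap.BilinForm.toMatrix' (Bq.comp r r + (2*a) • S)).det
      = Mq.det * (2*a) := by
    intro a
    rw [hblock a, Matrix.det_submatrix_equiv_self, Matrix.det_fromBlocks_zero₂₁]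
    simp
  have hdet1 : (LinearMap.BilinForm.toMatrix' B₁).det = Mq.det * (2*a₁) := hdet_block a₁
  have hdet2 : (LinearMap.BilinForm.toMatrix' B₂).det = lam^(m+1) * (Mq.det * (2*a₂)) := by
    rw [hB₂, map_smul, Matrix.det_smul, hdet_block a₂, Fintype.card_fin]
  have hMcong : LinearMap.BilinForm.toMatrix' B₁ = A.transpose * LinearMap.BilinForm.toMatrix' B₂ * A := by
    rw [← hcomp, LinearMap.BilinForm.toMatrix'_comp]
  have hdet : Mq.det * (2*a₁) = A.det^2 * (lam^(m+1) * (Mq.det * (2*a₂))) := by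
    have := congrArg Matrix.det hMcong
    rw [hdet1] at this
    rw [this, Matrix.det_mul, Matrix.det_mul, Matrix.det_transpose, hdet2]
    ring
  -- nondegeneracy
  have hnd : Bq.Nondegenerate := by
    refine ⟨fun x hx => ?_, fun x hx => ?_⟩
    · exact hq x fun y => by simpa [hBq, QuadraticMap.polarBilin_apply_apply] using hx y
    · exact hq x fun y => by simpa [hBq, QuadraticMap.polarBilin_apply_apply, QuadraticMap.polar_comm] using hx y
  have hDq : Mq.det ≠ 0 := by
    rw [hMq]
    exact (LinearMap.BilinForm.nondegenerate_toMatrix'_iff.mpr hnd).det_ne_zero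
  obtain ⟨t, ht⟩ := hm
  have hm1 : m + 1 = 2 * (t + 1) := by omega
  have hpow : lam ^ (m+1) = (lam ^ (t+1))^2 := by
    rw [show m + 1 = (t+1)*2 by omega, pow_mul]
  rw [hpow] at hdet
  have h' : 2*a₁ = A.det^2 * ((lam^(t+1))^2 * (2*a₂)) :=
    mul_left_cancel₀ hDq (by linear_combination hdet)
  have h'' : a₁ = A.det^2 * (lam^(t+1))^2 * a₂ :=
    mul_left_cancel₀ h2 (by linear_combination h')
  exact ⟨A.det * lam^(t+1) * a₂, by rw [h'']; ring⟩
end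

section
/- Let d be an odd positive integer and let m ≥ 1 be an integer. Let f₀ be the quadratic form on ℚ^{2m+2} given by f₀(x) = -x₀² + x₁² + Σ_{j=1}^{m} (d·x_{2j}² + x_{2j+1}²). Then there exists a (2m+2)×(2m+2) matrix A with integer entries such that f₀(A·x) = d·f₀(x) for all x ∈ ℚ^{2m+2} and A² = d·I, where I is the identity matrix. -/
/-- The explicit similarity matrix. -/
def milaMat (d a b : ℚ) (n : ℕ) : Matrix (Fin n) (Fin n) ℚ :=
  fun i j =>
    if i.val = 0 then (if j.val = 0 then a else if j.val = 1 then -b else 0)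
    else if i.val = 1 then (if j.val = 0 then b else if j.val = 1 then -a else 0)
    else if i.val % 2 = 0 then (if j.val = i.val + 1 then 1 else 0)
    else (if j.val = i.val - 1 then d else 0)

lemma milaSumTwo {n : ℕ} (x : Fin n → ℚ) (c₁ c₂ : Fin n) (h : c₁ ≠ c₂) (v₁ v₂ : ℚ)
    (f : Fin n → ℚ) (hf : ∀ j, f j = if j = c₁ then v₁ else if j = c₂ then v₂ else 0) :
    ∑ j, f j * x j = v₁ * x c₁ + v₂ * x c₂ := by
  have h1 : ∀ j ∈ Finset.univ, f j * x j =
      (if j = c₁ then v₁ * x c₁ else 0) + (if j = c₂ then v₂ * x c₂ else 0) := by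
    intro j _
    by_cases h1 : j = c₁ <;> by_cases h2 : j = c₂ <;> simp_all [hf]
  rw [Finset.sum_congr rfl h1, Finset.sum_add_distrib,
    Finset.sum_ite_eq' Finset.univ c₁, Finset.sum_ite_eq' Finset.univ c₂]
  simp

lemma milaMV0 (d a b : ℚ) {n : ℕ} (hn : 4 ≤ n) (x : Fin n → ℚ) :
    (milaMat d a b n).mulVec x ⟨0, by omega⟩ =
      a * x ⟨0, by omega⟩ + (-b) * x ⟨1, by omega⟩ := by
  apply milaSumTwo x ⟨0, by omega⟩ ⟨1, by omega⟩ (by simp [Fin.ext_iff])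
  intro j
  simp only [milaMat, Fin.ext_iff]
  split_ifs <;> simp_all

lemma milaMV1 (d a b : ℚ) {n : ℕ} (hn : 4 ≤ n) (x : Fin n → ℚ) :
    (milaMat d a b n).mulVec x ⟨1, by omega⟩ =
      b * x ⟨0, by omega⟩ + (-a) * x ⟨1, by omega⟩ := by
  apply milaSumTwo x ⟨0, by omega⟩ ⟨1, by omega⟩ (by simp [Fin.ext_iff])
  intro j
  simp only [milaMat, Fin.ext_iff]
  split_ifs <;> simp_all

lemma milaMVeven (d a b : ℚ) {n : ℕ} (hn : 4 ≤ n) (x : Fin n → ℚ)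
    (i i' : Fin n) (h2 : 2 ≤ i.val) (he : i.val % 2 = 0) (h' : i'.val = i.val + 1) :
    (milaMat d a b n).mulVec x i = x i' := by
  have hi := i.isLt
  have hi' := i'.isLt
  have := milaSumTwo x i' ⟨0, by omega⟩ (Fin.ne_of_val_ne (by show i'.val ≠ 0; omega)) 1 0
    (fun j => milaMat d a b n i j) ?_
  · simpa [Matrix.mulVec, dotProduct] using this
  · intro j
    have hj := j.isLt
    simp only [milaMat, Fin.ext_iff]
    split_ifs <;> simp_all <;> omega

lemma milaMVodd (d a b : ℚ) {n : ℕ} (hn : 4 ≤ n) (x : Fin n → ℚ)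
    (i i' : Fin n) (h2 : 3 ≤ i.val) (ho : i.val % 2 = 1) (h' : i'.val + 1 = i.val) :
    (milaMat d a b n).mulVec x i = d * x i' := by
  have hi := i.isLt
  have hi' := i'.isLt
  have := milaSumTwo x i' ⟨0, by omega⟩ (Fin.ne_of_val_ne (by show i'.val ≠ 0; omega)) d 0
    (fun j => milaMat d a b n i j) ?_
  · simpa [Matrix.mulVec, dotProduct] using this
  · intro j
    have hj := j.isLt
    simp only [milaMat, Fin.ext_iff]
    split_ifs <;> simp_all <;> omega

lemma milaMat_even_apply (d a b : ℚ) {n : ℕ} (p : Fin n) (h2 : 2 ≤ p.val)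
    (he : p.val % 2 = 0) (j : Fin n) :
    milaMat d a b n p j = if j.val = p.val + 1 then 1 else 0 := by
  simp only [milaMat]
  rw [if_neg (by omega), if_neg (by omega), if_pos he]

lemma milaMat_odd_apply (d a b : ℚ) {n : ℕ} (p : Fin n) (h3 : 3 ≤ p.val)
    (ho : p.val % 2 = 1) (j : Fin n) :
    milaMat d a b n p j = if j.val = p.val - 1 then d else 0 := by
  simp only [milaMat]
  rw [if_neg (by omega), if_neg (by omega), if_neg (by omega)]

/-- Let `d` be an odd positive integer, `m ≥ 1`, and let
`f₀(x) = -x₀² + x₁² + Σ_{j=1}^{m} (d·x_{2j}² + x_{2j+1}²)` on `ℚ^{2m+2}`.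
Then there is an integer matrix `A` with `f₀(A·x) = d·f₀(x)` for all `x`
and `A² = d·I`. -/
theorem exists_integer_matrix_similarity_odd_d
    (d : ℕ) (hd : 0 < d) (hodd : Odd d)
    (m : ℕ) (hm : 1 ≤ m)
    (f₀ : (Fin (2 * m + 2) → ℚ) → ℚ)
    (hf₀ : ∀ x, f₀ x =
      -(x ⟨0, by omega⟩) ^ 2 + (x ⟨1, by omega⟩) ^ 2
        + ∑ j : Fin m,
            ((d : ℚ) * (x ⟨2 * (j : ℕ) + 2, by have := j.isLt; omega⟩) ^ 2
              + (x ⟨2 * (j : ℕ) + 3, by have := j.isLt; omega⟩) ^ 2)) :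
    ∃ A : Matrix (Fin (2 * m + 2)) (Fin (2 * m + 2)) ℚ,
      (∀ i j, ∃ z : ℤ, A i j = (z : ℚ)) ∧
      (∀ x, f₀ (A.mulVec x) = (d : ℚ) * f₀ x) ∧
      A ^ 2 = (d : ℚ) • (1 : Matrix (Fin (2 * m + 2)) (Fin (2 * m + 2)) ℚ) := by
  obtain ⟨k, hk⟩ := hodd
  have hn : 4 ≤ 2 * m + 2 := by omega
  set n := 2 * m + 2 with hndef
  have hdk : (d : ℚ) = 2 * (k : ℚ) + 1 := by push_cast [hk]; ring
  set a : ℚ := (k : ℚ) + 1 with ha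
  set b : ℚ := (k : ℚ) with hb
  refine ⟨milaMat (d : ℚ) a b n, ?_, ?_, ?_⟩
  · -- integer entries
    intro i j
    simp only [milaMat]
    split_ifs
    · exact ⟨k + 1, by push_cast; ring⟩
    · exact ⟨-k, by push_cast; ring⟩
    · exact ⟨0, by norm_num⟩
    · exact ⟨k, by push_cast; ring⟩
    · exact ⟨-(k + 1), by push_cast; ring⟩
    · exact ⟨0, by norm_num⟩
    · exact ⟨1, by norm_num⟩
    · exact ⟨0, by norm_num⟩
    · exact ⟨d, by norm_num⟩
    · exact ⟨0, by norm_num⟩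
  · -- similarity
    intro x
    rw [hf₀, hf₀]
    rw [milaMV0 (d : ℚ) a b hn x, milaMV1 (d : ℚ) a b hn x]
    have he : ∀ j : Fin m,
        (milaMat (d : ℚ) a b n).mulVec x ⟨2 * (j : ℕ) + 2, by have := j.isLt; omega⟩ =
          x ⟨2 * (j : ℕ) + 3, by have := j.isLt; omega⟩ := by
      intro j
      exact milaMVeven (d : ℚ) a b hn x _ _ (by show 2 ≤ 2 * (j:ℕ) + 2; omega)
        (by show (2 * (j:ℕ) + 2) % 2 = 0; omega) (by show 2*(j:ℕ)+3 = 2*(j:ℕ)+2+1; omega)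
    have ho : ∀ j : Fin m,
        (milaMat (d : ℚ) a b n).mulVec x ⟨2 * (j : ℕ) + 3, by have := j.isLt; omega⟩ =
          (d : ℚ) * x ⟨2 * (j : ℕ) + 2, by have := j.isLt; omega⟩ := by
      intro j
      exact milaMVodd (d : ℚ) a b hn x _ _ (by show 3 ≤ 2 * (j:ℕ) + 3; omega)
        (by show (2 * (j:ℕ) + 3) % 2 = 1; omega) (by show 2*(j:ℕ)+2+1 = 2*(j:ℕ)+3; omega)
    rw [Finset.sum_congr rfl (fun j _ => by rw [he j, ho j])]
    have hsum : ∀ j : Fin m,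
        (d : ℚ) * (x ⟨2 * (j : ℕ) + 3, by have := j.isLt; omega⟩) ^ 2
          + ((d : ℚ) * x ⟨2 * (j : ℕ) + 2, by have := j.isLt; omega⟩) ^ 2
        = (d : ℚ) * ((d : ℚ) * (x ⟨2 * (j : ℕ) + 2, by have := j.isLt; omega⟩) ^ 2
            + (x ⟨2 * (j : ℕ) + 3, by have := j.isLt; omega⟩) ^ 2) := by
      intro j; ring
    rw [Finset.sum_congr rfl (fun j _ => hsum j), ← Finset.mul_sum, hdk]
    ring
  · -- A² = d • 1
    ext i kk
    rw [pow_two, Matrix.mul_apply]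
    have key : ∑ j, milaMat (d : ℚ) a b n i j * milaMat (d : ℚ) a b n j kk
        = (milaMat (d : ℚ) a b n).mulVec (fun j => milaMat (d : ℚ) a b n j kk) i := rfl
    rw [key]
    have hi := i.isLt
    have hkk := kk.isLt
    rcases Nat.lt_or_ge i.val 2 with hi2 | hi2
    · interval_cases h : i.val
      · have hieq : i = (⟨0, by omega⟩ : Fin n) := Fin.ext h
        rw [hieq, milaMV0 (d:ℚ) a b hn]
        simp only [milaMat, Matrix.smul_apply, Matrix.one_apply, Fin.ext_iff]
        by_cases h0 : kk.val = 0 <;> by_cases h1 : kk.val = 1 <;>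
          simp_all [hdk, eq_comm] <;> ring
      · have hieq : i = (⟨1, by omega⟩ : Fin n) := Fin.ext h
        rw [hieq, milaMV1 (d:ℚ) a b hn]
        simp only [milaMat, Matrix.smul_apply, Matrix.one_apply, Fin.ext_iff]
        by_cases h0 : kk.val = 0 <;> by_cases h1 : kk.val = 1 <;>
          simp_all [hdk, eq_comm] <;> ring
    · rcases Nat.even_or_odd i.val with he | ho
      · have he' : i.val % 2 = 0 := Nat.even_iff.mp he
        have hlt : i.val + 1 < n := by omega
        rw [milaMVeven (d:ℚ) a b hn _ i ⟨i.val + 1, hlt⟩ hi2 he' rfl]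
        rw [milaMat_odd_apply (d:ℚ) a b ⟨i.val + 1, hlt⟩ (by show 3 ≤ i.val + 1; omega)
          (by show (i.val + 1) % 2 = 1; omega) kk]
        have hv : (⟨i.val + 1, hlt⟩ : Fin n).val = i.val + 1 := rfl
        rw [hv]
        simp only [Matrix.smul_apply, Matrix.one_apply, smul_eq_mul]
        by_cases hik : i = kk
        · subst hik
          rw [if_pos (by omega), if_pos rfl]
          ring
        · rw [if_neg (fun h => hik (Fin.ext (by omega))), if_neg hik]
          ring
      · have ho' : i.val % 2 = 1 := Nat.odd_iff.mp ho
        have hge : 3 ≤ i.val := by omega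
        have hlt : i.val - 1 < n := by omega
        rw [milaMVodd (d:ℚ) a b hn _ i ⟨i.val - 1, hlt⟩ hge ho'
          (by show i.val - 1 + 1 = i.val; omega)]
        rw [milaMat_even_apply (d:ℚ) a b ⟨i.val - 1, hlt⟩ (by show 2 ≤ i.val - 1; omega)
          (by show (i.val - 1) % 2 = 0; omega) kk]
        have hv : (⟨i.val - 1, hlt⟩ : Fin n).val = i.val - 1 := rfl
        rw [hv]
        simp only [Matrix.smul_apply, Matrix.one_apply, smul_eq_mul]
        by_cases hik : i = kk
        · subst hik
          rw [if_pos (by omega), if_pos rfl]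
        · rw [if_neg (fun h => hik (Fin.ext (by omega))), if_neg hik]
end

section
/- Let k be a totally real number field with [k : ℚ] ≥ 2, and let b ∈ k be totally positive. Then there exists a nonzero s ∈ k such that exactly one ring homomorphism σ : k → ℝ satisfies σ(s²·b) < 1, and every other ring homomorphism σ' : k → ℝ satisfies σ'(s²·b) > 1. -/
/-!
The absolute values `x ↦ |σ x|` attached to distinct real embeddings `σ` are distinct infinite
places, hence pairwise inequivalent, so weak approximation gives `a` with `|σ₀ a| > 1` and
`|σ a| < 1` for `σ ≠ σ₀`. Then `c = a⁻¹` is small at `σ₀` and large elsewhere, and since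
`σ (c ^ (2 n) * b) = (σ c ^ 2) ^ n * σ b` with `σ b > 0`, a large power `s = c ^ n` works.
-/

open Filter

lemma eventually_pow_mul_lt_one {r : ℝ} (β : ℝ) (hr₀ : 0 ≤ r) (hr : r < 1) :
    ∀ᶠ n : ℕ in atTop, r ^ n * β < 1 := by
  have : Tendsto (fun n : ℕ ↦ r ^ n * β) atTop (nhds 0) := by
    simpa using (tendsto_pow_atTop_nhds_zero_of_lt_one hr₀ hr).mul_const β
  exact this.eventually_lt_const zero_lt_one

lemma eventually_one_lt_pow_mul {r β : ℝ} (hr : 1 < r) (hβ : 0 < β) :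
    ∀ᶠ n : ℕ in atTop, 1 < r ^ n * β :=
  ((tendsto_pow_atTop_atTop_of_one_lt hr).atTop_mul_const hβ).eventually_gt_atTop 1

namespace NumberField

variable {K : Type*} [Field K]

namespace InfinitePlace

noncomputable def ofRealEmbedding (σ : K →+* ℝ) : InfinitePlace K :=
  InfinitePlace.mk (Complex.ofRealHom.comp σ)

lemma ofRealEmbedding_apply (σ : K →+* ℝ) (x : K) :
    ofRealEmbedding σ x = |σ x| := by
  simp [ofRealEmbedding, InfinitePlace.apply]

lemma ofRealEmbedding_injective :
    Function.Injective (ofRealEmbedding (K := K)) := by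
  intro σ τ h
  -- a real embedding is its own conjugate, so `mk_eq_iff` leaves only `σ = τ`
  have hreal : ComplexEmbedding.conjugate (Complex.ofRealHom.comp σ) = Complex.ofRealHom.comp σ :=
    RingHom.ext fun x ↦ by simp [ComplexEmbedding.conjugate_coe_eq]
  rw [ofRealEmbedding, ofRealEmbedding, mk_eq_iff, hreal, or_self] at h
  exact (RingHom.cancel_left Complex.ofReal_injective).1 h

end InfinitePlace

variable [NumberField K]

theorem exists_abs_lt_one_one_lt_abs (σ₀ : K →+* ℝ) :
    ∃ c : K, c ≠ 0 ∧ |σ₀ c| < 1 ∧ ∀ σ ≠ σ₀, 1 < |σ c| := by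
  obtain ⟨a, ha₀, haσ⟩ := AbsoluteValue.exists_one_lt_lt_one_pi_of_not_isEquiv
    (v := fun σ : K →+* ℝ ↦ (InfinitePlace.ofRealEmbedding σ).1)
    (fun σ ↦ InfinitePlace.isNontrivial _)
    (fun σ τ h ↦ InfinitePlace.eq_iff_isEquiv.not.1 <|
      InfinitePlace.ofRealEmbedding_injective.ne h) σ₀
  simp only [← InfinitePlace.coe_apply, InfinitePlace.ofRealEmbedding_apply] at ha₀ haσ
  have ha : a ≠ 0 := by
    rintro rfl
    norm_num at ha₀
  refine ⟨a⁻¹, inv_ne_zero ha, ?_, fun σ hσ ↦ ?_⟩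
  · simpa only [map_inv₀, abs_inv] using inv_lt_one_of_one_lt₀ ha₀
  · rw [map_inv₀, abs_inv]
    exact one_lt_inv₀ (abs_pos.2 (by simpa using ha)) |>.2 (haσ σ hσ)

theorem exists_ne_zero_sq_mul_lt_one_one_lt {b : K} (hb : ∀ σ : K →+* ℝ, 0 < σ b)
    (σ₀ : K →+* ℝ) :
    ∃ s : K, s ≠ 0 ∧ σ₀ (s ^ 2 * b) < 1 ∧ ∀ σ ≠ σ₀, 1 < σ (s ^ 2 * b) := by
  obtain ⟨c, hc, hσ₀c, hσc⟩ := exists_abs_lt_one_one_lt_abs σ₀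
  have hpow (σ : K →+* ℝ) (n : ℕ) : σ ((c ^ n) ^ 2 * b) = (σ c ^ 2) ^ n * σ b := by
    rw [map_mul, map_pow, map_pow, ← pow_mul, ← pow_mul, mul_comm n]
  have hsmall := eventually_pow_mul_lt_one (σ₀ b) (sq_nonneg (σ₀ c))
    ((sq_lt_one_iff_abs_lt_one _).2 hσ₀c)
  have hlarge : ∀ᶠ n : ℕ in atTop, ∀ σ ≠ σ₀, 1 < (σ c ^ 2) ^ n * σ b :=
    eventually_all.2 fun σ ↦ eventually_imp_distrib_left.2 fun hσ ↦
      eventually_one_lt_pow_mul ((one_lt_sq_iff_one_lt_abs _).2 (hσc σ hσ)) (hb σ)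
  obtain ⟨n, hn₀, hn⟩ := (hsmall.and hlarge).exists
  exact ⟨c ^ n, pow_ne_zero n hc, by rwa [hpow], fun σ hσ ↦ by rw [hpow]; exact hn σ hσ⟩

end NumberField

theorem exists_scaling_one_small_conjugate_general
    (k : Type*) [Field k] [NumberField k]
    (htotreal : ∀ σ : k →+* ℂ, ∀ x : k, (σ x).im = 0)
    (b : k) (hb : ∀ σ : k →+* ℝ, 0 < σ b) :
    ∃ s : k, s ≠ 0 ∧ ∃ σ₀ : k →+* ℝ, σ₀ (s ^ 2 * b) < 1 ∧
      ∀ σ : k →+* ℝ, σ ≠ σ₀ → 1 < σ (s ^ 2 * b) := by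
  obtain ⟨φ⟩ : Nonempty (k →+* ℂ) := inferInstance
  have hφ : NumberField.ComplexEmbedding.IsReal φ := NumberField.ComplexEmbedding.isReal_iff.2 <|
    RingHom.ext fun x ↦ Complex.ext (by simp) (by simp [htotreal φ x])
  obtain ⟨s, hs, hs₀, hs'⟩ := NumberField.exists_ne_zero_sq_mul_lt_one_one_lt hb hφ.embedding
  exact ⟨s, hs, hφ.embedding, hs₀, hs'⟩

/-- Let `k` be a totally real number field with `[k : ℚ] ≥ 2`,
and let `b ∈ k` be totally positive. Then there is a nonzero `s ∈ k` such that
exactly one ring homomorphism `σ : k → ℝ` satisfies `σ(s²·b) < 1`, and every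
other one satisfies `σ'(s²·b) > 1`. -/
theorem exists_scaling_one_small_conjugate
    (k : Type*) [Field k] [NumberField k]
    (htotreal : ∀ σ : k →+* ℂ, ∀ x : k, (σ x).im = 0)
    (hdeg : 2 ≤ Module.finrank ℚ k)
    (b : k) (hb : ∀ σ : k →+* ℝ, 0 < σ b) :
    ∃ s : k, s ≠ 0 ∧ ∃ σ₀ : k →+* ℝ, σ₀ (s ^ 2 * b) < 1 ∧
      ∀ σ : k →+* ℝ, σ ≠ σ₀ → 1 < σ (s ^ 2 * b) :=
  exists_scaling_one_small_conjugate_general k htotreal b hb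
end

section
/- Let m ≥ 0 be an integer and let f₀ be the quadratic form on ℚ^{4+2m} given by f₀(x) = -x₀² + x₁² + x₂² + ⋯ + x_{4+2m-1}² (one coefficient -1 and all remaining coefficients 1). Then there exists a (4+2m)×(4+2m) matrix A with rational entries such that f₀(A·x) = 2·f₀(x) for all x ∈ ℚ^{4+2m} and A² = 2·I, where I is the identity matrix. -/
/-!
Write `4 + 2m = 2(m + 2)` and split the form into the binary forms `-x² + y²` and `x² + y²`
(the latter `m + 1` times). Each binary form has a rational similarity `B` of norm `2` with
`B² = 2`: `(x, y) ↦ (x + y, x - y)` for `x² + y²`, and `(x, y) ↦ ((3x + y)/2, -(x + 3y)/2)`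
for `-x² + y²` (a `2 × 2` block cannot avoid denominators here, as `a² - c² = 2` has no
integer solution). The block diagonal matrix of these blocks is the required `A`.
-/

open Matrix

section Similarity

variable {R n : Type*} [CommSemiring R] [Fintype n]

theorem Matrix.dotProduct_diagonal_mulVec_self [DecidableEq n] (w x : n → R) :
    x ⬝ᵥ diagonal w *ᵥ x = ∑ i, w i * x i ^ 2 := by
  simp only [dotProduct, mulVec_diagonal]
  exact Finset.sum_congr rfl fun i _ => by ring

theorem Matrix.dotProduct_mulVec_mulVec_of_transpose_mul_mul {A G : Matrix n n R} {c : R}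
    (h : Aᵀ * G * A = c • G) (x : n → R) :
    A *ᵥ x ⬝ᵥ G *ᵥ (A *ᵥ x) = c * (x ⬝ᵥ G *ᵥ x) := by
  rw [mulVec_mulVec, dotProduct_comm, dotProduct_mulVec, dotProduct_comm, ← mulVec_transpose,
    mulVec_mulVec, ← Matrix.mul_assoc, h, smul_mulVec, dotProduct_smul, smul_eq_mul]

theorem Matrix.blockDiagonal_transpose_mul_mul {o : Type*} [Fintype o] [DecidableEq o]
    {M G : o → Matrix n n R} {c : R} (h : ∀ k, (M k)ᵀ * G k * M k = c • G k) :
    (blockDiagonal M)ᵀ * blockDiagonal G * blockDiagonal M = c • blockDiagonal G := by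
  rw [blockDiagonal_transpose, ← blockDiagonal_mul, ← blockDiagonal_mul, ← blockDiagonal_smul]
  exact congrArg blockDiagonal (funext h)

theorem Matrix.reindex_transpose_mul_mul {l : Type*} [Fintype l] (e : n ≃ l)
    {A G : Matrix n n R} {c : R} (h : Aᵀ * G * A = c • G) :
    (reindex e e A)ᵀ * reindex e e G * reindex e e A = c • reindex e e G := by
  simp only [reindex_apply, transpose_submatrix, submatrix_mul_equiv, h]
  rfl

end Similarity

namespace SqrtTwoSimilarity

def hyperbolicBlock : Matrix (Fin 2) (Fin 2) ℚ := !![3/2, 1/2; -1/2, -3/2]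

def euclideanBlock : Matrix (Fin 2) (Fin 2) ℚ := !![1, 1; 1, -1]

theorem hyperbolicBlock_sq : hyperbolicBlock ^ 2 = (2 : ℚ) • 1 := by
  rw [← Matrix.ext_iff]
  simp [hyperbolicBlock, Fin.forall_fin_two, sq, mul_apply, Fin.sum_univ_two, one_apply]
  norm_num

theorem euclideanBlock_sq : euclideanBlock ^ 2 = (2 : ℚ) • 1 := by
  rw [← Matrix.ext_iff]
  simp [euclideanBlock, Fin.forall_fin_two, sq, mul_apply, Fin.sum_univ_two, one_apply]
  norm_num

theorem hyperbolicBlock_transpose_mul_mul :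
    hyperbolicBlockᵀ * diagonal ![-1, 1] * hyperbolicBlock = (2 : ℚ) • diagonal ![-1, 1] := by
  rw [← Matrix.ext_iff]
  simp [hyperbolicBlock, Fin.forall_fin_two, mul_apply, Fin.sum_univ_two]
  norm_num

theorem euclideanBlock_transpose_mul_self :
    euclideanBlockᵀ * euclideanBlock = (2 : ℚ) • 1 := by
  rw [← Matrix.ext_iff]
  simp [euclideanBlock, Fin.forall_fin_two, mul_apply, Fin.sum_univ_two, one_apply]
  norm_num

variable (m : ℕ)

def blocks (k : Fin (m + 2)) : Matrix (Fin 2) (Fin 2) ℚ :=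
  if k = 0 then hyperbolicBlock else euclideanBlock

def blockWeights (k : Fin (m + 2)) : Fin 2 → ℚ :=
  if k = 0 then ![-1, 1] else fun _ => 1

theorem blocks_sq (k : Fin (m + 2)) : blocks m k ^ 2 = (2 : ℚ) • 1 := by
  unfold blocks
  split_ifs
  exacts [hyperbolicBlock_sq, euclideanBlock_sq]

theorem blocks_transpose_mul_mul (k : Fin (m + 2)) :
    (blocks m k)ᵀ * diagonal (blockWeights m k) * blocks m k =
      (2 : ℚ) • diagonal (blockWeights m k) := by
  unfold blocks blockWeights
  split_ifs
  · exact hyperbolicBlock_transpose_mul_mul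
  · rw [diagonal_one, Matrix.mul_one]
    exact euclideanBlock_transpose_mul_self

def blockIndexEquiv : Fin 2 × Fin (m + 2) ≃ Fin (4 + 2 * m) :=
  finProdFinEquiv.trans (finCongr (by ring))

theorem blockWeights_apply (a : Fin 2) (k : Fin (m + 2)) :
    blockWeights m k a = if (blockIndexEquiv m (a, k)).val = 0 then -1 else 1 := by
  simp only [blockIndexEquiv, Equiv.trans_apply, finCongr_apply, Fin.val_cast,
    finProdFinEquiv_apply_val, blockWeights]
  by_cases hk : k = 0
  · subst hk
    fin_cases a <;> simp
  · have : k.val ≠ 0 := fun h => hk (Fin.ext h)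
    simp [hk, this]

theorem reindex_blockDiagonal_blockWeights :
    reindex (blockIndexEquiv m) (blockIndexEquiv m)
        (blockDiagonal fun k => diagonal (blockWeights m k)) =
      diagonal fun i => if i.val = 0 then -1 else 1 := by
  rw [blockDiagonal_diagonal, reindex_apply, submatrix_diagonal_equiv]
  congr 1
  funext i
  obtain ⟨⟨a, k⟩, rfl⟩ := (blockIndexEquiv m).surjective i
  simp only [Function.comp_apply, Equiv.symm_apply_apply, blockWeights_apply]

def similarity : Matrix (Fin (4 + 2 * m)) (Fin (4 + 2 * m)) ℚ :=
  reindex (blockIndexEquiv m) (blockIndexEquiv m) (blockDiagonal (blocks m))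

theorem similarity_sq : similarity m ^ 2 = (2 : ℚ) • 1 := by
  change reindexAlgEquiv ℚ ℚ (blockIndexEquiv m) _ ^ 2 = _
  rw [← map_pow, ← blockDiagonal_pow, show blocks m ^ 2 = (2 : ℚ) • 1 from funext (blocks_sq m),
    blockDiagonal_smul, blockDiagonal_one, map_smul, map_one]

theorem similarity_transpose_mul_mul :
    (similarity m)ᵀ * diagonal (fun i => if i.val = 0 then -1 else 1) * similarity m =
      (2 : ℚ) • diagonal fun i => if i.val = 0 then -1 else 1 := by
  rw [similarity, ← reindex_blockDiagonal_blockWeights]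
  exact reindex_transpose_mul_mul _ (blockDiagonal_transpose_mul_mul (blocks_transpose_mul_mul m))

end SqrtTwoSimilarity

open SqrtTwoSimilarity in
/-- For `m ≥ 0` and `f₀(x) = -x₀² + x₁² + ⋯ + x_{4+2m-1}²` on
`ℚ^{4+2m}`, there exists a rational matrix `A` with `f₀(A·x) = 2·f₀(x)` for all
`x` and `A² = 2·I`. -/
theorem exists_rational_matrix_similarity_two
    (m : ℕ)
    (f₀ : (Fin (4 + 2 * m) → ℚ) → ℚ)
    (hf₀ : ∀ x, f₀ x =
      ∑ i : Fin (4 + 2 * m), (if i.val = 0 then (-1 : ℚ) else 1) * x i ^ 2) :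
    ∃ A : Matrix (Fin (4 + 2 * m)) (Fin (4 + 2 * m)) ℚ,
      (∀ x, f₀ (A.mulVec x) = 2 * f₀ x) ∧
      A ^ 2 = (2 : ℚ) • (1 : Matrix (Fin (4 + 2 * m)) (Fin (4 + 2 * m)) ℚ) := by
  refine ⟨similarity m, fun x => ?_, similarity_sq m⟩
  rw [hf₀, hf₀, ← dotProduct_diagonal_mulVec_self, ← dotProduct_diagonal_mulVec_self]
  exact dotProduct_mulVec_mulVec_of_transpose_mul_mul (similarity_transpose_mul_mul m) x
end

section
/- Let k be a field of characteristic ≠ 2 and let K be a field extension of k. Let q₁ and q₂ be quadratic forms on kⁿ, let a₁, a₂, λ be nonzero elements of k, and suppose q₁ is equivalent over k to λ·q₂. Suppose moreover that there exists c ∈ K with c² equal to the image of λ·a₁·a₂ in K. Then the base changes to K of the two quadratic forms q₁ ⊥ ⟨a₁⟩ and λ·(q₂ ⊥ ⟨a₂⟩) on k^{n+1} (where q ⊥ ⟨a⟩ denotes (x,t) ↦ q(x) + a·t²) are equivalent over K. -/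
def matForm {k : Type*} [CommRing k] {n : ℕ}
    (M : Matrix (Fin n) (Fin n) k) (x : Fin n → k) : k :=
  dotProduct x (M.mulVec x)

open Matrix

lemma matForm_add {k : Type*} [CommRing k] {n : ℕ} (M : Matrix (Fin n) (Fin n) k) (x y : Fin n → k) :
    matForm M (x + y) = matForm M x + matForm M y + (x ⬝ᵥ M *ᵥ y + y ⬝ᵥ M *ᵥ x) := by
  simp [matForm, mulVec_add, dotProduct_add, add_dotProduct]
  ring

lemma matForm_transpose {k : Type*} [CommRing k] {n : ℕ} (M : Matrix (Fin n) (Fin n) k) (x : Fin n → k) :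
    matForm Mᵀ x = matForm M x := by
  rw [matForm, matForm, mulVec_transpose, dotProduct_comm, ← dotProduct_mulVec]

lemma polar_eq {k : Type*} [CommRing k] {n : ℕ} (P Q : Matrix (Fin n) (Fin n) k)
    (h : ∀ x, matForm P x = matForm Q x) : P + Pᵀ = Q + Qᵀ := by
  ext i j
  have hdi := h (Pi.single i 1)
  have hdj := h (Pi.single j 1)
  have hs := h (Pi.single i 1 + Pi.single j 1)
  simp [matForm_add, matForm, Matrix.mulVec_add, Matrix.mulVec_single, single_dotProduct] at hdi hdj hs
  simp [Matrix.add_apply, Matrix.transpose_apply]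
  linear_combination hs - hdi - hdj

lemma matForm_conj {k : Type*} [CommRing k] {n : ℕ} (lam : k) (A M : Matrix (Fin n) (Fin n) k)
    (x : Fin n → k) :
    matForm (lam • (Aᵀ * M * A)) x = lam * matForm M (A *ᵥ x) := by
  rw [matForm, matForm, smul_mulVec, dotProduct_smul, ← mulVec_mulVec, ← mulVec_mulVec,
    dotProduct_mulVec, vecMul_transpose]
  rfl

lemma map_smul_mat {k K : Type*} [CommRing k] [CommRing K] (f : k →+* K) {n : ℕ} (lam : k)
    (M : Matrix (Fin n) (Fin n) k) : (lam • M).map f = f lam • M.map f := by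
  ext i j
  simp [Matrix.map_apply, _root_.map_mul]

/-- The linear map `(y, t) ↦ (B y, d t)` on `K^{n+1}` (snoc coordinates). -/
def snocMap {K : Type*} [Field K] {n : ℕ} (B : Matrix (Fin n) (Fin n) K) (d : K) :
    (Fin (n + 1) → K) →ₗ[K] (Fin (n + 1) → K) where
  toFun x := Fin.snoc (B *ᵥ fun j => x j.castSucc) (d * x (Fin.last n))
  map_add' x y := by
    funext i
    refine Fin.lastCases ?_ (fun j => ?_) i
    · simp only [Fin.snoc_last, Pi.add_apply]; ring
    · simp only [Fin.snoc_castSucc, Pi.add_apply]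
      rw [show (fun j : Fin n => x j.castSucc + y j.castSucc)
          = (fun j : Fin n => x j.castSucc) + (fun j : Fin n => y j.castSucc) from rfl,
        Matrix.mulVec_add]
      rfl
  map_smul' a x := by
    funext i
    refine Fin.lastCases ?_ (fun j => ?_) i
    · simp only [Fin.snoc_last, Pi.smul_apply, RingHom.id_apply, smul_eq_mul]; ring
    · simp only [Fin.snoc_castSucc, Pi.smul_apply, RingHom.id_apply, smul_eq_mul]
      rw [show (fun j : Fin n => a * x j.castSucc)
          = a • (fun j : Fin n => x j.castSucc) from rfl, Matrix.mulVec_smul]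
      rfl

lemma snocMap_comp_apply {K : Type*} [Field K] {n : ℕ} (B B' : Matrix (Fin n) (Fin n) K)
    (d d' : K) (hB : B * B' = 1) (hd : d * d' = 1) (x : Fin (n + 1) → K) :
    snocMap B d (snocMap B' d' x) = x := by
  funext i
  refine Fin.lastCases ?_ (fun j => ?_) i
  · simp [snocMap, ← mul_assoc, hd]
  · have h1 : (fun j => (Fin.snoc (B' *ᵥ fun j => x j.castSucc) (d' * x (Fin.last n)) :
        Fin (n+1) → K) j.castSucc) = B' *ᵥ fun j => x j.castSucc := by
      funext j; simp
    simp [snocMap, h1, Matrix.mulVec_mulVec, hB]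

/-- Let `k` be a field of characteristic `≠ 2`, `K/k` a field
extension, `q₁, q₂` quadratic forms on `kⁿ` (given by matrices `M₁, M₂`), and
`a₁, a₂, λ ∈ k` nonzero with `q₁` equivalent over `k` to `λ·q₂`. If some
`c ∈ K` satisfies `c² = λ·a₁·a₂` (in `K`), then the base changes to `K` of
`q₁ ⊥ ⟨a₁⟩` and `λ·(q₂ ⊥ ⟨a₂⟩)` are equivalent over `K`. -/
theorem baseChange_equiv_of_sqrt_discriminant
    (k K : Type*) [Field k] [Field K] [Algebra k K] (h2 : (2 : k) ≠ 0)
    (n : ℕ) (M₁ M₂ : Matrix (Fin n) (Fin n) k)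
    (a₁ a₂ lam : k) (ha₁ : a₁ ≠ 0) (ha₂ : a₂ ≠ 0) (hlam : lam ≠ 0)
    (hequiv : ∃ T : (Fin n → k) ≃ₗ[k] (Fin n → k),
      ∀ x, lam * matForm M₂ (T x) = matForm M₁ x)
    (c : K) (hc : c ^ 2 = algebraMap k K (lam * a₁ * a₂)) :
    ∃ S : (Fin (n + 1) → K) ≃ₗ[K] (Fin (n + 1) → K),
      ∀ x : Fin (n + 1) → K,
        algebraMap k K lam *
          (matForm (M₂.map (algebraMap k K)) (fun j : Fin n => S x j.castSucc)
            + algebraMap k K a₂ * S x (Fin.last n) ^ 2)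
        = matForm (M₁.map (algebraMap k K)) (fun j : Fin n => x j.castSucc)
            + algebraMap k K a₁ * x (Fin.last n) ^ 2 := by
  classical
  obtain ⟨T, hT⟩ := hequiv
  set f := algebraMap k K with hfdef
  have hfinj : Function.Injective f := (algebraMap k K).injective
  have hne : ∀ b : k, b ≠ 0 → f b ≠ 0 := fun b hb h => hb (hfinj (by rw [h, map_zero]))
  -- matrices of T and T⁻¹
  set A : Matrix (Fin n) (Fin n) k := LinearMap.toMatrix' (T : (Fin n → k) →ₗ[k] (Fin n → k))
    with hAdef
  set A' : Matrix (Fin n) (Fin n) k :=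
    LinearMap.toMatrix' (T.symm : (Fin n → k) →ₗ[k] (Fin n → k)) with hA'def
  have hTx : ∀ x, A *ᵥ x = T x := by
    intro x
    rw [hAdef, ← Matrix.toLin'_apply, Matrix.toLin'_toMatrix']
    rfl
  have hAA' : A * A' = 1 := by
    rw [hAdef, hA'def, ← LinearMap.toMatrix'_comp]
    have : (T : (Fin n → k) →ₗ[k] (Fin n → k)) ∘ₗ (T.symm : (Fin n → k) →ₗ[k] (Fin n → k)) =
        LinearMap.id := by ext x; simp
    rw [this, LinearMap.toMatrix'_id]
  have hA'A : A' * A = 1 := by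
    rw [hAdef, hA'def, ← LinearMap.toMatrix'_comp]
    have : (T.symm : (Fin n → k) →ₗ[k] (Fin n → k)) ∘ₗ (T : (Fin n → k) →ₗ[k] (Fin n → k)) =
        LinearMap.id := by ext x; simp
    rw [this, LinearMap.toMatrix'_id]
  -- the congruent matrix
  set N : Matrix (Fin n) (Fin n) k := lam • (Aᵀ * M₂ * A) with hNdef
  have hN : ∀ x, matForm N x = matForm M₁ x := by
    intro x
    rw [hNdef, matForm_conj, hTx, hT]
  have hpol : N + Nᵀ = M₁ + M₁ᵀ := polar_eq N M₁ hN
  -- base change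
  set B : Matrix (Fin n) (Fin n) K := A.map f with hBdef
  set B' : Matrix (Fin n) (Fin n) K := A'.map f with hB'def
  have hBB' : B * B' = 1 := by
    rw [hBdef, hB'def, ← Matrix.map_mul, hAA', Matrix.map_one f (map_zero f) (map_one f)]
  have h2K : (2 : K) ≠ 0 := by
    have h := hne 2 h2
    simpa [map_ofNat] using h
  -- key identity over K
  have key : ∀ y : Fin n → K, f lam * matForm (M₂.map f) (B *ᵥ y) = matForm (M₁.map f) y := by
    intro y
    have hmap : N.map f = f lam • ((B)ᵀ * M₂.map f * B) := by
      rw [hNdef, map_smul_mat]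
      congr 1
      rw [Matrix.map_mul, Matrix.map_mul, Matrix.transpose_map]
    have h1 : matForm (N.map f) y = f lam * matForm (M₂.map f) (B *ᵥ y) := by
      rw [hmap, matForm_conj]
    have hpK : N.map f + (N.map f)ᵀ = M₁.map f + (M₁.map f)ᵀ := by
      ext i j
      have h := congrFun (congrFun (congrArg (fun M => M : _ → _) hpol) i) j
      have h' : N i j + N j i = M₁ i j + M₁ j i := by
        have := congrFun (congrFun hpol i) j
        simpa [Matrix.add_apply, Matrix.transpose_apply] using this
      simp only [Matrix.add_apply, Matrix.transpose_apply, Matrix.map_apply, ← map_add, h']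
    have hdouble : ∀ P : Matrix (Fin n) (Fin n) K, matForm (P + Pᵀ) y = 2 * matForm P y := by
      intro P
      unfold matForm
      rw [Matrix.add_mulVec, dotProduct_add, two_mul]
      congr 1
      exact matForm_transpose P y
    have h2eq : 2 * matForm (N.map f) y = 2 * matForm (M₁.map f) y := by
      rw [← hdouble, ← hdouble, hpK]
    have := mul_left_cancel₀ h2K h2eq
    rw [← h1, this]
  -- the scaling factor
  have hprod : lam * a₁ * a₂ ≠ 0 := mul_ne_zero (mul_ne_zero hlam ha₁) ha₂
  have hc0 : c ≠ 0 := by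
    intro h
    exact hne _ hprod (by rw [← hc, h]; ring)
  have hu : f lam * f a₂ ≠ 0 := mul_ne_zero (hne _ hlam) (hne _ ha₂)
  set d : K := c / (f lam * f a₂) with hddef
  have hd0 : d ≠ 0 := div_ne_zero hc0 hu
  have hdval : f lam * (f a₂ * d ^ 2) = f a₁ := by
    rw [hddef, div_pow]
    have hc' : c ^ 2 = (f lam * f a₂) * f a₁ := by
      rw [hc, _root_.map_mul, _root_.map_mul]; ring
    rw [hc']
    have := hne _ hlam
    have := hne _ ha₂
    field_simp
  have hdd : d * d⁻¹ = 1 := mul_inv_cancel₀ hd0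
  -- assemble the equivalence
  have hB'B : B' * B = 1 := by
    rw [hBdef, hB'def, ← Matrix.map_mul, hA'A, Matrix.map_one f (map_zero f) (map_one f)]
  have hfg : snocMap B d ∘ₗ snocMap B' d⁻¹ = LinearMap.id :=
    LinearMap.ext fun x => snocMap_comp_apply B B' d d⁻¹ hBB' hdd x
  have hgf : snocMap B' d⁻¹ ∘ₗ snocMap B d = LinearMap.id :=
    LinearMap.ext fun x => snocMap_comp_apply B' B d⁻¹ d hB'B (by rw [mul_comm]; exact hdd) x
  refine ⟨LinearEquiv.ofLinear (snocMap B d) (snocMap B' d⁻¹) hfg hgf, ?_⟩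
  intro x
  simp only [LinearEquiv.ofLinear_apply]
  have hsc : (fun j : Fin n => (snocMap B d x) j.castSucc) = B *ᵥ fun j => x j.castSucc := by
    funext j
    simp [snocMap]
  have hsl : (snocMap B d x) (Fin.last n) = d * x (Fin.last n) := by simp [snocMap]
  rw [hsc, hsl, mul_add, key]
  linear_combination x (Fin.last n) ^ 2 * hdval
end
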